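/- arXiv:1112.4434 — 6 statements merged into one kernel-verified Lean document; each statement's English description precedes it below -/
import Mathlib

section
/- Let d ≥ 1 and n ≥ 4 be integers and let X = {x_i : i ∈ {1,…,n}^d} where x_i = ((i_1 − 1/2)/n, …, (i_d − 1/2)/n). Let A' ⊆ (0,1)^d and η be such that 4/n ≤ η ≤ 1, set A = B(A', η) := {x ∈ ℝ^d : dist_∞(x, A') < η}, and suppose A ⊆ (0,1)^d. Then 8^{−d} n^d Vol(A) ≤ #(A ∩ X) ≤ 4^d n^d Vol(A), where Vol is the Lebesgue measure and # denotes cardinality. -/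
/-!
Let `A = B(A', η)`. The cells `B(x, 1/(2n))` of the grid points `x` are pairwise disjoint.

Upper bound: a grid point `x ∈ A` lies in some `B(y, η)` with `y ∈ A'`; moving `x` a distance
`1/(4n)` towards `y` gives the centre of a ball of radius `1/(4n)` inside both `B(y, η)` and the
cell of `x`. These balls are disjoint subsets of `A`, so `#(A ∩ X) (2n)⁻ᵈ ≤ Vol A`.

Lower bound: for `a ∈ B(y, η)` the same construction with radius `1/n` gives `p` within `1/n`
of `a` with `B(p, 1/n) ⊆ A`. The grid point nearest to `p` lies in `B(p, 1/(2n)) ⊆ A`, so it is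
a point of `A ∩ X` within `3/(2n)` of `a`. Hence the balls of radius `3/(2n)` around `A ∩ X`
cover `A`, and `Vol A ≤ #(A ∩ X) (3/n)ᵈ`.
-/

open MeasureTheory Set

noncomputable section

/-- Design points on the grid: `x_i = ((i_1+1/2)/n, …, (i_d+1/2)/n)` for `i : Fin d → Fin n`
(0-based indexing, corresponding to `(i_k - 1/2)/n` for 1-based `i_k`). -/
def dpt (d n : ℕ) (i : Fin d → Fin n) : Fin d → ℝ := fun k => ((i k : ℝ) + 1 / 2) / n

open Function Metric
open scoped ENNReal

section CardMeasure

variable {α ι : Type*} [MeasurableSpace α] [Finite ι] (μ : Measure α) {s : ι → Set α}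
  {A : Set α} {v : ℝ≥0∞}

theorem natCard_mul_le_measure_of_pairwise_disjoint (hs_disj : Pairwise (Disjoint on s))
    (hm : ∀ i, MeasurableSet (s i)) (hs : ∀ i, s i ⊆ A) (hv : ∀ i, v ≤ μ (s i)) :
    Nat.card ι * v ≤ μ A := by
  have := Fintype.ofFinite ι
  calc (Nat.card ι : ℝ≥0∞) * v = ∑ _i : ι, v := by simp
    _ ≤ ∑ i, μ (s i) := Finset.sum_le_sum fun i _ => hv i
    _ = μ (⋃ i, s i) := ((measure_iUnion hs_disj hm).trans (tsum_fintype _)).symm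
    _ ≤ μ A := measure_mono (iUnion_subset hs)

theorem measure_le_natCard_mul_of_subset_iUnion (hA : A ⊆ ⋃ i, s i)
    (hv : ∀ i, μ (s i) ≤ v) :
    μ A ≤ Nat.card ι * v := by
  have := Fintype.ofFinite ι
  calc μ A ≤ ∑ i, μ (s i) := (measure_mono hA).trans (measure_iUnion_fintype_le μ s)
    _ ≤ ∑ _i : ι, v := Finset.sum_le_sum fun i _ => hv i
    _ = Nat.card ι * v := by simp

end CardMeasure

theorem exists_ball_subset_ball_of_dist_le {E : Type*} [NormedAddCommGroup E]
    [NormedSpace ℝ E] {x y : E} {r η : ℝ} (hxy : dist x y ≤ η) (hr : 0 < r)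
    (hrη : r ≤ η) :
    ∃ p, ball p r ⊆ ball y η ∧ dist p x ≤ r := by
  have hη : 0 < η := hr.trans_le hrη
  set t := r / η
  have ht : t * η = r := div_mul_cancel₀ r hη.ne'
  have ht₀ : 0 ≤ t := by positivity
  have ht₁ : t ≤ 1 := (div_le_one hη).mpr hrη
  refine ⟨AffineMap.lineMap x y t, ball_subset_ball' ?_, ?_⟩
  · rw [dist_lineMap_right, Real.norm_of_nonneg (sub_nonneg.mpr ht₁)]
    nlinarith
  · rw [dist_lineMap_left, Real.norm_of_nonneg ht₀]
    nlinarith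

section Grid

variable {d n : ℕ}

theorem exists_abs_grid_sub_le (hn : 0 < n) {x : ℝ} (hx : x ∈ Ico (0 : ℝ) 1) :
    ∃ j : Fin n, |((j : ℝ) + 1 / 2) / n - x| ≤ 1 / (2 * n) := by
  have hn' : (0 : ℝ) < n := Nat.cast_pos.mpr hn
  have hnx : 0 ≤ n * x := mul_nonneg hn'.le hx.1
  have hlt : n * x < n := by simpa using mul_lt_mul_of_pos_left hx.2 hn'
  refine ⟨⟨⌊n * x⌋₊, (Nat.floor_lt hnx).mpr hlt⟩, ?_⟩
  have h₁ := Nat.floor_le hnx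
  have h₂ := Nat.lt_floor_add_one (n * x)
  have hsub :
      ((⌊n * x⌋₊ : ℝ) + 1 / 2) / n - x = ((⌊n * x⌋₊ : ℝ) + 1 / 2 - n * x) / n := by
    field_simp
  rw [hsub, abs_div, Nat.abs_cast, ← div_div]
  gcongr
  rw [abs_le]
  constructor <;> linarith

theorem exists_dist_dpt_le (hn : 0 < n) {p : Fin d → ℝ} (hp : ∀ k, p k ∈ Ico (0 : ℝ) 1) :
    ∃ i, dist (dpt d n i) p ≤ 1 / (2 * n) := by
  choose i hi using fun k => exists_abs_grid_sub_le hn (hp k)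
  exact ⟨i, (dist_pi_le_iff (by positivity)).mpr fun k => hi k⟩

theorem one_div_le_dist_dpt {i j : Fin d → Fin n} (hij : i ≠ j) :
    1 / (n : ℝ) ≤ dist (dpt d n i) (dpt d n j) := by
  obtain ⟨k, hk⟩ := Function.ne_iff.mp hij
  have hk' : (i k : ℤ) - j k ≠ 0 := sub_ne_zero.mpr (by exact_mod_cast Fin.val_ne_of_ne hk)
  have hone : (1 : ℝ) ≤ |(i k : ℝ) - j k| := by exact_mod_cast Int.one_le_abs hk'
  calc 1 / (n : ℝ) ≤ |(i k : ℝ) - j k| / n := by gcongr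
    _ = dist (dpt d n i k) (dpt d n j k) := by
        rw [Real.dist_eq, dpt, dpt, ← sub_div, abs_div, Nat.abs_cast]; ring_nf
    _ ≤ dist (dpt d n i) (dpt d n j) := dist_le_pi_dist _ _ k

theorem pairwise_disjoint_ball_dpt :
    Pairwise (Disjoint on fun i => ball (dpt d n i) (1 / (2 * n))) := fun i j hij =>
  ball_disjoint_ball <| by
    calc 1 / (2 * n) + 1 / (2 * n) = 1 / (n : ℝ) := by ring
      _ ≤ _ := one_div_le_dist_dpt hij

end Grid

section Thickening

variable {d n : ℕ} {η : ℝ} {A' : Set (Fin d → ℝ)}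

theorem natCard_dpt_mem_thickening_mul_le_volume (hn : 0 < n) (hη : 1 / (4 * n) ≤ η) :
    (Nat.card {i // dpt d n i ∈ thickening η A'} : ℝ≥0∞) *
        ENNReal.ofReal ((1 / (2 * n)) ^ d)
      ≤ volume (thickening η A') := by
  have hr : (0 : ℝ) < 1 / (4 * n) := by positivity
  have hball : ∀ i : {i // dpt d n i ∈ thickening η A'}, ∃ p,
      ball p (1 / (4 * n)) ⊆ thickening η A' ∧
        ball p (1 / (4 * n)) ⊆ ball (dpt d n i) (1 / (2 * n)) := by
    rintro ⟨i, hi⟩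
    obtain ⟨y, hy, hiy⟩ := mem_thickening_iff.mp hi
    obtain ⟨p, hpy, hpi⟩ := exists_ball_subset_ball_of_dist_le hiy.le hr hη
    refine ⟨p, hpy.trans (ball_subset_thickening hy η), ball_subset_ball' ?_⟩
    calc 1 / (4 * n) + dist p (dpt d n i) ≤ 1 / (4 * n) + 1 / (4 * n) := by gcongr
      _ = 1 / (2 * n) := by ring
  choose p hpA hpi using hball
  refine natCard_mul_le_measure_of_pairwise_disjoint volume
    (fun i j hij => (pairwise_disjoint_ball_dpt (Subtype.coe_injective.ne hij)).mono
      (hpi i) (hpi j)) (fun _ => measurableSet_ball) hpA fun i => ?_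
  rw [Real.volume_pi_ball _ hr, Fintype.card_fin]
  exact le_of_eq (congrArg _ (by ring))

theorem thickening_subset_iUnion_closedBall_dpt (hn : 0 < n) (hη : 1 / n ≤ η)
    (hA : ∀ x ∈ thickening η A', ∀ k, x k ∈ Ico (0 : ℝ) 1) :
    thickening η A' ⊆
      ⋃ i : {i // dpt d n i ∈ thickening η A'}, closedBall (dpt d n i) (3 / (2 * n)) := by
  have hn' : (0 : ℝ) < n := Nat.cast_pos.mpr hn
  intro a ha
  obtain ⟨y, hy, hay⟩ := mem_thickening_iff.mp ha
  obtain ⟨p, hpy, hpa⟩ := exists_ball_subset_ball_of_dist_le hay.le (by positivity) hη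
  have hpA : ball p (1 / n) ⊆ thickening η A' := hpy.trans (ball_subset_thickening hy η)
  obtain ⟨i, hip⟩ := exists_dist_dpt_le hn (hA p (hpA (mem_ball_self (by positivity))))
  have hiA : dpt d n i ∈ thickening η A' :=
    hpA (mem_ball.mpr (hip.trans_lt (by gcongr; linarith)))
  refine mem_iUnion.mpr ⟨⟨i, hiA⟩, mem_closedBall.mpr ?_⟩
  calc dist a (dpt d n i) ≤ dist a p + dist p (dpt d n i) := dist_triangle _ _ _
    _ ≤ 1 / n + 1 / (2 * n) := add_le_add (dist_comm a p ▸ hpa) (dist_comm p _ ▸ hip)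
    _ = 3 / (2 * n) := by ring

theorem volume_thickening_le_natCard_dpt_mul (hn : 0 < n) (hη : 1 / n ≤ η)
    (hA : ∀ x ∈ thickening η A', ∀ k, x k ∈ Ico (0 : ℝ) 1) :
    volume (thickening η A')
      ≤ Nat.card {i // dpt d n i ∈ thickening η A'} * ENNReal.ofReal ((3 / n) ^ d) := by
  refine measure_le_natCard_mul_of_subset_iUnion volume
    (thickening_subset_iUnion_closedBall_dpt hn hη hA) fun i => ?_
  rw [Real.volume_pi_closedBall _ (by positivity), Fintype.card_fin]
  exact le_of_eq (congrArg _ (by ring))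

theorem natCard_dpt_mem_thickening_le (hn : 0 < n) (hη : 1 / (4 * n) ≤ η)
    (hfin : volume (thickening η A') ≠ ∞) :
    (Nat.card {i // dpt d n i ∈ thickening η A'} : ℝ)
      ≤ 2 ^ d * n ^ d * (volume (thickening η A')).toReal := by
  have h := ENNReal.toReal_mono hfin (natCard_dpt_mem_thickening_mul_le_volume hn hη)
  rw [ENNReal.toReal_mul, ENNReal.toReal_natCast, ENNReal.toReal_ofReal (by positivity)] at h
  calc (Nat.card {i // dpt d n i ∈ thickening η A'} : ℝ)
      = Nat.card {i // dpt d n i ∈ thickening η A'} * (1 / (2 * n)) ^ d * (2 ^ d * n ^ d) := by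
        rw [div_pow, one_pow, mul_pow]; field_simp
    _ ≤ (volume (thickening η A')).toReal * (2 ^ d * n ^ d) := by gcongr
    _ = 2 ^ d * n ^ d * (volume (thickening η A')).toReal := by ring

theorem pow_mul_volume_thickening_le (hn : 0 < n) (hη : 1 / n ≤ η)
    (hA : ∀ x ∈ thickening η A', ∀ k, x k ∈ Ico (0 : ℝ) 1) :
    (n : ℝ) ^ d * (volume (thickening η A')).toReal
      ≤ 3 ^ d * Nat.card {i // dpt d n i ∈ thickening η A'} := by
  have h := ENNReal.toReal_mono (by finiteness) (volume_thickening_le_natCard_dpt_mul hn hη hA)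
  rw [ENNReal.toReal_mul, ENNReal.toReal_natCast, ENNReal.toReal_ofReal (by positivity)] at h
  calc (n : ℝ) ^ d * (volume (thickening η A')).toReal
      ≤ n ^ d * (Nat.card {i // dpt d n i ∈ thickening η A'} * (3 / n) ^ d) := by gcongr
    _ = 3 ^ d * Nat.card {i // dpt d n i ∈ thickening η A'} := by
        rw [div_pow]; field_simp

end Thickening

theorem count_grid_points_in_thickening_general
    (d n : ℕ) (hn : 4 ≤ n)
    (A' : Set (Fin d → ℝ))
    (η : ℝ) (hη₁ : 4 / (n : ℝ) ≤ η)
    (A : Set (Fin d → ℝ)) (hA : A = Metric.thickening η A')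
    (hAsub : ∀ x ∈ A, ∀ k, x k ∈ Set.Ioo (0 : ℝ) 1) :
    ((8 : ℝ) ^ d)⁻¹ * (n : ℝ) ^ d * (volume A).toReal ≤
        (Nat.card {i : Fin d → Fin n // dpt d n i ∈ A} : ℝ) ∧
      (Nat.card {i : Fin d → Fin n // dpt d n i ∈ A} : ℝ) ≤
        (4 : ℝ) ^ d * (n : ℝ) ^ d * (volume A).toReal := by
  subst hA
  have hn₀ : 0 < n := by omega
  have hcube : ∀ x ∈ thickening η A', ∀ k, x k ∈ Ico (0 : ℝ) 1 :=
    fun x hx k => Ioo_subset_Ico_self (hAsub x hx k)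
  have hfin : volume (thickening η A') ≠ ∞ :=
    ((isBounded_Icc (0 : Fin d → ℝ) 1).subset fun x hx =>
      ⟨fun k => (hcube x hx k).1, fun k => (hcube x hx k).2.le⟩).measure_lt_top.ne
  have hη_lower : 1 / (n : ℝ) ≤ η := le_trans (by gcongr; norm_num) hη₁
  have hη_upper : 1 / (4 * n : ℝ) ≤ η := le_trans (by gcongr; linarith) hη_lower
  constructor
  · calc ((8 : ℝ) ^ d)⁻¹ * n ^ d * (volume (thickening η A')).toReal
        ≤ ((8 : ℝ) ^ d)⁻¹ * (3 ^ d * Nat.card {i // dpt d n i ∈ thickening η A'}) := by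
          rw [mul_assoc]
          exact mul_le_mul_of_nonneg_left (pow_mul_volume_thickening_le hn₀ hη_lower hcube)
            (by positivity)
      _ ≤ Nat.card {i // dpt d n i ∈ thickening η A'} := by
          rw [← mul_assoc, ← div_eq_inv_mul]
          exact mul_le_of_le_one_left (by positivity)
            ((div_le_one (by positivity)).mpr (by gcongr; norm_num))
  · calc (Nat.card {i // dpt d n i ∈ thickening η A'} : ℝ)
        ≤ 2 ^ d * n ^ d * (volume (thickening η A')).toReal :=
          natCard_dpt_mem_thickening_le hn₀ hη_upper hfin
      _ ≤ 4 ^ d * n ^ d * (volume (thickening η A')).toReal := by gcongr; norm_num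

/-- counting sample points in an `η`-neighborhood.
For `A' ⊆ (0,1)^d`, `4/n ≤ η ≤ 1`, and `A = B(A', η)` (the open sup-norm `η`-neighborhood),
if `A ⊆ (0,1)^d` then `8^{-d} n^d Vol(A) ≤ #(A ∩ X) ≤ 4^d n^d Vol(A)`, where `X` is the set
of design points. -/
theorem count_grid_points_in_thickening
    (d n : ℕ) (hd : 1 ≤ d) (hn : 4 ≤ n)
    (A' : Set (Fin d → ℝ)) (hA' : ∀ x ∈ A', ∀ k, x k ∈ Set.Ioo (0 : ℝ) 1)
    (η : ℝ) (hη₁ : 4 / (n : ℝ) ≤ η) (hη₂ : η ≤ 1)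
    (A : Set (Fin d → ℝ)) (hA : A = Metric.thickening η A')
    (hAsub : ∀ x ∈ A, ∀ k, x k ∈ Set.Ioo (0 : ℝ) 1) :
    ((8 : ℝ) ^ d)⁻¹ * (n : ℝ) ^ d * (volume A).toReal ≤
        (Nat.card {i : Fin d → Fin n // dpt d n i ∈ A} : ℝ) ∧
      (Nat.card {i : Fin d → Fin n // dpt d n i ∈ A} : ℝ) ≤
        (4 : ℝ) ^ d * (n : ℝ) ^ d * (volume A).toReal :=
  count_grid_points_in_thickening_general d n hn A' η hη₁ A hA hAsub

end
end

section
/- Let 1 ≤ d_0 ≤ d be integers, C ≥ 1, and let φ : ℝ^{d_0} → ℝ^d be injective with φ and φ^{−1} (on the range of φ) both C-Lipschitz with respect to the sup norms. Then there exists a constant C' > 1 depending only on C, d, d_0 such that for A := φ((0,a)^{d_0}) and all reals a, h with 0 < h ≤ a ≤ 1: (1/C') a^{d_0} h^{d−d_0} ≤ Vol(B(A,h)) ≤ C' a^{d_0} h^{d−d_0}, where B(A,h) = {x ∈ ℝ^d : dist_∞(x, A) < h}. Moreover, if ψ : ℝ^d → ℝ^d is injective with ψ and ψ^{−1} both C-Lipschitz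 and A := ψ(∂B(0,1)) is the image of the sup-norm unit sphere, then there exists C' > 1 depending only on C and d such that (1/C') h ≤ Vol(B(A,h)) ≤ C' h for all h ∈ (0,1). -/
/-!
Upper bounds: cover the parameter cube by `⌈a/h⌉^d₀` sup-balls of radius `h`; since `φ` is
`C`-Lipschitz, the `h`-thickening of the image lies in the union of the balls of radius `(C+1)h`
around the images of their centres. Lower bounds: a grid of spacing `2Ch` in the cube has about
`(a/(Ch))^d₀` points, and since `φ⁻¹` is `C`-Lipschitz their images are `2h`-separated, so the
`h`-balls around them are disjoint and lie in the thickening. The sup-norm unit sphere is the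
union of its `2d` faces, each an isometric copy of the closed unit ball of dimension `d - 1`,
which reduces the second statement to the cube estimates in dimension `d - 1`.
-/

open MeasureTheory Set

noncomputable section

open Metric
open scoped ENNReal NNReal

def centeredGrid {ι : Type*} (x₀ : ι → ℝ) (s : ℝ) {n : ℕ} (v : ι → Fin n) : ι → ℝ :=
  fun i => x₀ i + ((v i : ℝ) - ((n : ℝ) - 1) / 2) * s

section Grid

variable {ι : Type*} [Fintype ι]

lemma le_dist_centeredGrid_of_ne {s : ℝ} (hs : 0 ≤ s) (x₀ : ι → ℝ) {n : ℕ} {v w : ι → Fin n}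
    (hvw : v ≠ w) : s ≤ dist (centeredGrid x₀ s v) (centeredGrid x₀ s w) := by
  obtain ⟨i, hi⟩ := Function.ne_iff.mp hvw
  have hgap : (1 : ℝ) ≤ |((v i : ℕ) : ℝ) - (w i : ℕ)| := by
    have : ((v i : ℕ) : ℤ) ≠ (w i : ℕ) := by exact_mod_cast Fin.val_ne_of_ne hi
    exact_mod_cast Int.one_le_abs (sub_ne_zero.mpr this)
  calc s ≤ |((v i : ℕ) : ℝ) - (w i : ℕ)| * s := le_mul_of_one_le_left hs hgap
    _ = dist (centeredGrid x₀ s v i) (centeredGrid x₀ s w i) := by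
      rw [Real.dist_eq, centeredGrid, centeredGrid, ← abs_of_nonneg hs, ← abs_mul,
        abs_of_nonneg hs]
      ring_nf
    _ ≤ dist (centeredGrid x₀ s v) (centeredGrid x₀ s w) := dist_le_pi_dist _ _ i

lemma centeredGrid_mem_ball {s ρ : ℝ} (hs : 0 < s) (hρ : 0 < ρ) {n : ℕ}
    (hn : ((n : ℝ) - 1) * s < 2 * ρ) (x₀ : ι → ℝ) (v : ι → Fin n) :
    centeredGrid x₀ s v ∈ ball x₀ ρ := by
  rw [mem_ball, dist_pi_lt_iff hρ]
  intro i
  have hk : ((v i : ℕ) : ℝ) + 1 ≤ n := by exact_mod_cast (v i).isLt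
  rw [Real.dist_eq, centeredGrid, add_sub_cancel_left, abs_mul, abs_of_pos hs]
  have : |((v i : ℕ) : ℝ) - ((n : ℝ) - 1) / 2| ≤ ((n : ℝ) - 1) / 2 := by
    rw [abs_le]; constructor <;> linarith [(Nat.cast_nonneg (v i : ℕ) : (0 : ℝ) ≤ _)]
  nlinarith

lemma exists_lt_abs_sub_le_half {n : ℕ} (hn : 1 ≤ n) {u : ℝ} (hu₀ : -(1 / 2) ≤ u)
    (hun : u ≤ n - 1 / 2) : ∃ k < n, |u - k| ≤ 1 / 2 := by
  have hlow : u - 1 / 2 ≤ ⌈u - 1 / 2⌉₊ := Nat.le_ceil _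
  have hupp : (⌈u - 1 / 2⌉₊ : ℝ) ≤ u + 1 / 2 := by
    rcases le_or_gt (u - 1 / 2) 0 with h | h
    · rw [Nat.ceil_eq_zero.mpr h]; push_cast; linarith
    · linarith [Nat.ceil_lt_add_one h.le]
  have hlt : ⌈u - 1 / 2⌉₊ ≤ n - 1 :=
    Nat.ceil_le.mpr (by rw [Nat.cast_sub hn]; push_cast; linarith)
  exact ⟨⌈u - 1 / 2⌉₊, by omega, abs_le.mpr ⟨by linarith, by linarith⟩⟩

lemma exists_centeredGrid_dist_le {s ρ : ℝ} (hs : 0 < s) (hρ : 0 < ρ) {n : ℕ}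
    (hn : 2 * ρ ≤ n * s) {x₀ x : ι → ℝ} (hx : x ∈ closedBall x₀ ρ) :
    ∃ v : ι → Fin n, dist x (centeredGrid x₀ s v) ≤ s / 2 := by
  have hn₁ : 1 ≤ n := Nat.one_le_iff_ne_zero.mpr <| by
    rintro rfl
    simp only [CharP.cast_eq_zero, zero_mul] at hn
    linarith
  have hcoord : ∀ i, ∃ k : Fin n, |x i - (x₀ i + ((k : ℝ) - ((n : ℝ) - 1) / 2) * s)| ≤ s / 2 := by
    intro i
    have hxi : |(x i - x₀ i) / s| ≤ n / 2 := by
      rw [mem_closedBall, dist_pi_le_iff hρ.le] at hx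
      rw [abs_div, abs_of_pos hs, div_le_iff₀ hs, ← Real.dist_eq]
      linarith [hx i]
    obtain ⟨k, hk, hku⟩ := exists_lt_abs_sub_le_half hn₁
      (u := (x i - x₀ i) / s + ((n : ℝ) - 1) / 2)
      (by linarith [(abs_le.mp hxi).1]) (by linarith [(abs_le.mp hxi).2])
    refine ⟨⟨k, hk⟩, ?_⟩
    calc |x i - (x₀ i + ((k : ℝ) - ((n : ℝ) - 1) / 2) * s)|
        = |(x i - x₀ i) / s + ((n : ℝ) - 1) / 2 - k| * s := by
          rw [← abs_of_pos hs, ← abs_mul, abs_of_pos hs]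
          congr 1
          field_simp
          ring
      _ ≤ s / 2 := by linarith [mul_le_mul_of_nonneg_right hku hs.le]
  choose v hv using hcoord
  exact ⟨v, (dist_pi_le_iff (by positivity)).mpr fun i => by rw [Real.dist_eq]; exact hv i⟩

end Grid

section Volume

variable {E : Type*} [PseudoMetricSpace E] {d : ℕ} {φ : E → (Fin d → ℝ)} {K : ℝ≥0} {h : ℝ}
  {ι : Type*} [Fintype ι]

lemma volume_thickening_image_le_of_subset_iUnion_closedBall (hφ : LipschitzWith K φ)
    (hh : 0 < h) {S : Set E} {c : ι → E} {r : ℝ} (hr : 0 ≤ r)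
    (hS : S ⊆ ⋃ i, closedBall (c i) r) :
    volume (thickening h (φ '' S)) ≤ Fintype.card ι * ENNReal.ofReal ((2 * (K * r + h)) ^ d) := by
  have hcover : thickening h (φ '' S) ⊆ ⋃ i, ball (φ (c i)) (K * r + h) := by
    intro x hx
    obtain ⟨_, ⟨u, hu, rfl⟩, hxu⟩ := mem_thickening_iff.mp hx
    obtain ⟨i, hi⟩ := mem_iUnion.mp (hS hu)
    refine mem_iUnion.mpr ⟨i, mem_ball.mpr ?_⟩
    calc dist x (φ (c i)) ≤ dist x (φ u) + dist (φ u) (φ (c i)) := dist_triangle _ _ _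
      _ < h + K * r := add_lt_add_of_lt_of_le hxu <|
          (hφ.dist_le_mul u (c i)).trans (mul_le_mul_of_nonneg_left (mem_closedBall.mp hi) K.2)
      _ = K * r + h := add_comm _ _
  calc volume (thickening h (φ '' S))
      ≤ volume (⋃ i, ball (φ (c i)) (K * r + h)) := measure_mono hcover
    _ ≤ ∑ i, volume (ball (φ (c i)) (K * r + h)) := measure_iUnion_fintype_le _ _
    _ = Fintype.card ι * ENNReal.ofReal ((2 * (K * r + h)) ^ d) := by
      simp [Real.volume_pi_ball _ (by positivity : 0 < (K : ℝ) * r + h)]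

lemma le_volume_thickening_image_of_pairwise_le_dist (hφ : AntilipschitzWith K φ) (hK : 0 < K)
    (hh : 0 < h) {S : Set E} {c : ι → E} (hcS : ∀ i, c i ∈ S)
    (hsep : Pairwise fun i j => 2 * K * h ≤ dist (c i) (c j)) :
    Fintype.card ι * ENNReal.ofReal ((2 * h) ^ d) ≤ volume (thickening h (φ '' S)) := by
  have hdisj : Pairwise (Function.onFun Disjoint fun i => ball (φ (c i)) h) := by
    intro i j hij
    apply ball_disjoint_ball
    have : K * (2 * h) ≤ K * dist (φ (c i)) (φ (c j)) := by
      linarith [(hsep hij).trans (hφ.le_mul_dist _ _)]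
    linarith [le_of_mul_le_mul_left this (NNReal.coe_pos.mpr hK)]
  calc (Fintype.card ι : ℝ≥0∞) * ENNReal.ofReal ((2 * h) ^ d)
      = ∑ i, volume (ball (φ (c i)) h) := by simp [Real.volume_pi_ball _ hh]
    _ = volume (⋃ i, ball (φ (c i)) h) := by
      rw [measure_iUnion hdisj fun _ => measurableSet_ball, tsum_fintype]
    _ ≤ volume (thickening h (φ '' S)) :=
      measure_mono <| iUnion_subset fun i => ball_subset_thickening (mem_image_of_mem φ (hcS i)) h

end Volume

section Cube

variable {ι : Type*} [Fintype ι] [DecidableEq ι] {d : ℕ} {φ : (ι → ℝ) → (Fin d → ℝ)} {K : ℝ≥0}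
  {h ρ : ℝ}

lemma volume_thickening_image_closedBall_le (hφ : LipschitzWith K φ) (hh : 0 < h)
    (hhρ : h ≤ 2 * ρ) (x₀ : ι → ℝ) :
    volume (thickening h (φ '' closedBall x₀ ρ)) ≤
      ENNReal.ofReal ((2 * ρ / h) ^ Fintype.card ι * (2 * (K + 1) * h) ^ d) := by
  set n := ⌈ρ / h⌉₊
  have hn : 2 * ρ ≤ n * (2 * h) := by
    have := (div_le_iff₀ hh).mp (Nat.le_ceil (ρ / h))
    linarith
  have hn' : (n : ℝ) ≤ 2 * ρ / h := by
    calc (n : ℝ) ≤ 2 * (ρ / h) := Nat.ceil_le_two_mul (by rw [le_div_iff₀ hh]; linarith)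
      _ = 2 * ρ / h := by ring
  have hcover : closedBall x₀ ρ ⊆ ⋃ v : ι → Fin n, closedBall (centeredGrid x₀ (2 * h) v) h := by
    intro x hx
    obtain ⟨v, hv⟩ := exists_centeredGrid_dist_le (by positivity) (by linarith) hn hx
    exact mem_iUnion.mpr ⟨v, mem_closedBall.mpr (by linarith)⟩
  refine (volume_thickening_image_le_of_subset_iUnion_closedBall hφ hh hh.le hcover).trans ?_
  rw [Fintype.card_fun, Fintype.card_fin, ← ENNReal.ofReal_natCast,
    ← ENNReal.ofReal_mul (by positivity)]
  apply ENNReal.ofReal_le_ofReal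
  push_cast
  rw [show 2 * ((K : ℝ) * h + h) = 2 * (K + 1) * h by ring]
  gcongr

lemma le_volume_thickening_image_ball (hφ : AntilipschitzWith K φ) (hK : 0 < K) (hh : 0 < h)
    (hρ : 0 < ρ) (x₀ : ι → ℝ) :
    ENNReal.ofReal ((ρ / (K * h)) ^ Fintype.card ι * (2 * h) ^ d) ≤
      volume (thickening h (φ '' ball x₀ ρ)) := by
  have hs : 0 < 2 * K * h := by positivity
  set n := ⌈2 * ρ / (2 * K * h)⌉₊
  have hn : ((n : ℝ) - 1) * (2 * K * h) < 2 * ρ := by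
    have := Nat.ceil_lt_add_one (by positivity : 0 ≤ 2 * ρ / (2 * K * h))
    linarith [(lt_div_iff₀ hs).mp (show (n : ℝ) - 1 < 2 * ρ / (2 * K * h) by linarith)]
  refine le_trans ?_ <| le_volume_thickening_image_of_pairwise_le_dist hφ hK hh
    (c := centeredGrid x₀ (2 * K * h) (n := n)) (centeredGrid_mem_ball hs hρ hn x₀)
    fun v w hvw => le_dist_centeredGrid_of_ne hs.le x₀ hvw
  rw [Fintype.card_fun, Fintype.card_fin, ← ENNReal.ofReal_natCast,
    ← ENNReal.ofReal_mul (by positivity)]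
  apply ENNReal.ofReal_le_ofReal
  push_cast
  gcongr
  calc ρ / (K * h) = 2 * ρ / (2 * K * h) := by field_simp
    _ ≤ n := Nat.le_ceil _

end Cube

lemma setOf_forall_mem_Ioo_eq_ball {ι : Type*} [Fintype ι] {a : ℝ} (ha : 0 < a) :
    {u : ι → ℝ | ∀ k, u k ∈ Ioo 0 a} = ball (fun _ => a / 2) (a / 2) := by
  rw [ball_pi _ (half_pos ha)]
  ext u
  simp [Real.ball_eq_Ioo]

section ParameterCube

variable {d₀ d : ℕ} {φ : (Fin d₀ → ℝ) → (Fin d → ℝ)} {K : ℝ≥0} {a h : ℝ}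

lemma volume_thickening_image_cube_le (hd₀ : d₀ ≤ d) (hφ : LipschitzWith K φ) (hh : 0 < h)
    (hha : h ≤ a) :
    volume (thickening h (φ '' {u | ∀ k, u k ∈ Ioo 0 a})) ≤
      ENNReal.ofReal ((2 * (K + 1)) ^ d * (a ^ d₀ * h ^ (d - d₀))) := by
  rw [setOf_forall_mem_Ioo_eq_ball (hh.trans_le hha)]
  refine (measure_mono (thickening_subset_of_subset h (image_mono ball_subset_closedBall))).trans
    ((volume_thickening_image_closedBall_le hφ hh (by linarith) _).trans (le_of_eq ?_))
  obtain ⟨e, rfl⟩ := Nat.exists_eq_add_of_le hd₀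
  rw [Fintype.card_fin, Nat.add_sub_cancel_left]
  congr 1
  simp only [div_pow, mul_pow, pow_add]
  field_simp

lemma le_volume_thickening_image_cube (hd₀ : d₀ ≤ d) (hφ : AntilipschitzWith K φ) (hK : 0 < K)
    (hh : 0 < h) (ha : 0 < a) :
    ENNReal.ofReal (2 ^ d / (2 * K) ^ d₀ * (a ^ d₀ * h ^ (d - d₀))) ≤
      volume (thickening h (φ '' {u | ∀ k, u k ∈ Ioo 0 a})) := by
  rw [setOf_forall_mem_Ioo_eq_ball ha]
  refine le_trans (le_of_eq ?_) (le_volume_thickening_image_ball hφ hK hh (half_pos ha) _)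
  obtain ⟨e, rfl⟩ := Nat.exists_eq_add_of_le hd₀
  rw [Fintype.card_fin, Nat.add_sub_cancel_left]
  congr 1
  simp only [div_pow, mul_pow, pow_add]
  field_simp

end ParameterCube

section Face

variable {ι : Type*} [DecidableEq ι]

def insertCoord (i : ι) (t : ℝ) (y : {j // j ≠ i} → ℝ) : ι → ℝ :=
  fun j => if hj : j = i then t else y ⟨j, hj⟩

lemma insertCoord_restrict (x : ι → ℝ) (i : ι) : insertCoord i (x i) (fun j => x j) = x := by
  funext j
  by_cases hj : j = i
  · subst hj; simp [insertCoord]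
  · simp [insertCoord, hj]

variable [Fintype ι]

lemma isometry_insertCoord (i : ι) (t : ℝ) : Isometry (insertCoord i t) := by
  refine Isometry.of_dist_eq fun y y' => le_antisymm ?_ ?_
  · refine (dist_pi_le_iff dist_nonneg).mpr fun j => ?_
    by_cases hj : j = i
    · simp [insertCoord, hj]
    · simpa [insertCoord, hj] using dist_le_pi_dist y y' ⟨j, hj⟩
  · refine (dist_pi_le_iff dist_nonneg).mpr fun j => ?_
    simpa [insertCoord, j.2] using dist_le_pi_dist (insertCoord i t y) (insertCoord i t y') j

lemma norm_insertCoord {i : ι} {t : ℝ} {y : {j // j ≠ i} → ℝ} (hy : ‖y‖ ≤ |t|) :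
    ‖insertCoord i t y‖ = |t| := by
  refine le_antisymm ((pi_norm_le_iff_of_nonneg (abs_nonneg t)).mpr fun j => ?_) ?_
  · by_cases hj : j = i
    · simp [insertCoord, hj]
    · simpa [insertCoord, hj] using (norm_le_pi_norm y ⟨j, hj⟩).trans hy
  · simpa [insertCoord] using norm_le_pi_norm (insertCoord i t y) i

lemma insertCoord_image_closedBall_subset_sphere (i : ι) {t : ℝ} (ht : |t| = 1) :
    insertCoord i t '' closedBall 0 1 ⊆ sphere 0 1 := by
  rintro _ ⟨y, hy, rfl⟩
  rw [mem_sphere_zero_iff_norm, norm_insertCoord (by rwa [ht, ← mem_closedBall_zero_iff]), ht]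

lemma sphere_subset_iUnion_insertCoord_image :
    sphere (0 : ι → ℝ) 1 ⊆
      ⋃ p : ι × Bool, insertCoord p.1 (if p.2 then 1 else -1) '' closedBall 0 1 := by
  intro x hx
  rw [mem_sphere_zero_iff_norm] at hx
  rcases isEmpty_or_nonempty ι with hι | hι
  · simp [Subsingleton.elim x 0] at hx
  obtain ⟨i, -, hi⟩ := Finset.exists_max_image Finset.univ (fun j => ‖x j‖) Finset.univ_nonempty
  have hxi : |x i| = 1 := by
    refine le_antisymm (hx ▸ norm_le_pi_norm x i) ?_
    rw [← hx]
    exact (pi_norm_le_iff_of_nonneg (norm_nonneg _)).mpr fun j => hi j (Finset.mem_univ j)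
  have hrest : (fun j : {j // j ≠ i} => x j) ∈ closedBall 0 1 := by
    rw [mem_closedBall_zero_iff, ← hx]
    exact (pi_norm_le_iff_of_nonneg (norm_nonneg _)).mpr fun j => norm_le_pi_norm x j
  rcases abs_eq (zero_le_one' ℝ) |>.mp hxi with h1 | h1
  · exact mem_iUnion.mpr ⟨(i, true), _, hrest, by simpa [h1] using insertCoord_restrict x i⟩
  · exact mem_iUnion.mpr ⟨(i, false), _, hrest, by simpa [h1] using insertCoord_restrict x i⟩

end Face

section Sphere

variable {d : ℕ} {ψ : (Fin d → ℝ) → (Fin d → ℝ)} {K : ℝ≥0} {h : ℝ}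

lemma volume_thickening_image_sphere_le (hd : 1 ≤ d) (hψ : LipschitzWith K ψ) (hh : 0 < h)
    (h2 : h ≤ 2) :
    volume (thickening h (ψ '' sphere 0 1)) ≤
      ENNReal.ofReal (2 * d * 2 ^ (d - 1) * (2 * (K + 1)) ^ d * h) := by
  set face : Fin d × Bool → Set (Fin d → ℝ) := fun p =>
    (ψ ∘ insertCoord p.1 (if p.2 then 1 else -1)) '' closedBall 0 1
  have hface : ∀ p, volume (thickening h (face p)) ≤
      ENNReal.ofReal ((2 / h) ^ (d - 1) * (2 * (K + 1) * h) ^ d) := fun p => by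
    have hlip := hψ.comp (isometry_insertCoord p.1 (if p.2 then 1 else -1)).lipschitz
    rw [mul_one] at hlip
    simpa [face] using volume_thickening_image_closedBall_le (ρ := 1) hlip hh (by linarith) 0
  calc volume (thickening h (ψ '' sphere 0 1))
      ≤ volume (⋃ p, thickening h (face p)) := by
        rw [← thickening_iUnion]
        refine measure_mono (thickening_subset_of_subset h ?_)
        simp only [face, image_comp, ← image_iUnion]
        exact image_mono sphere_subset_iUnion_insertCoord_image
    _ ≤ ∑ p, volume (thickening h (face p)) := measure_iUnion_fintype_le _ _
    _ ≤ ∑ _p : Fin d × Bool, ENNReal.ofReal ((2 / h) ^ (d - 1) * (2 * (K + 1) * h) ^ d) :=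
        Finset.sum_le_sum fun p _ => hface p
    _ = ENNReal.ofReal (2 * d * 2 ^ (d - 1) * (2 * (K + 1)) ^ d * h) := by
        obtain ⟨e, rfl⟩ := Nat.exists_eq_add_of_le' hd
        rw [Finset.sum_const, Finset.card_univ, nsmul_eq_mul, ← ENNReal.ofReal_natCast,
          ← ENNReal.ofReal_mul (by positivity)]
        congr 1
        simp only [Fintype.card_prod, Fintype.card_fin, Fintype.card_bool, Nat.add_sub_cancel,
          div_pow, mul_pow, pow_succ]
        field_simp
        push_cast
        ring

lemma le_volume_thickening_image_sphere (hd : 1 ≤ d) (hψ : AntilipschitzWith K ψ) (hK : 0 < K)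
    (hh : 0 < h) :
    ENNReal.ofReal (2 ^ d / K ^ (d - 1) * h) ≤ volume (thickening h (ψ '' sphere 0 1)) := by
  let i₀ : Fin d := ⟨0, hd⟩
  have hanti := hψ.comp (isometry_insertCoord i₀ 1).antilipschitz
  rw [one_mul] at hanti
  calc ENNReal.ofReal (2 ^ d / K ^ (d - 1) * h)
      = ENNReal.ofReal ((1 / (K * h)) ^ (d - 1) * (2 * h) ^ d) := by
        obtain ⟨e, rfl⟩ := Nat.exists_eq_add_of_le' hd
        congr 1
        simp only [Nat.add_sub_cancel, div_pow, mul_pow, pow_succ, one_pow]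
        field_simp
    _ ≤ volume (thickening h ((ψ ∘ insertCoord i₀ 1) '' ball 0 1)) := by
        simpa using le_volume_thickening_image_ball hanti hK hh one_pos 0
    _ ≤ volume (thickening h (ψ '' sphere 0 1)) := by
        refine measure_mono (thickening_subset_of_subset h ?_)
        rw [image_comp]
        exact image_mono <| (image_mono ball_subset_closedBall).trans
          (insertCoord_image_closedBall_subset_sphere i₀ abs_one)

end Sphere

lemma exists_one_lt_one_div_le_and_le {L : ℝ} (hL : 0 < L) (U : ℝ) :
    ∃ C' : ℝ, 1 < C' ∧ 1 / C' ≤ L ∧ U ≤ C' := by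
  refine ⟨max U (1 / L) + 1, ?_, ?_, ?_⟩
  · linarith [le_max_right U (1 / L), one_div_pos.mpr hL]
  · rw [one_div_le (by linarith [le_max_right U (1 / L), one_div_pos.mpr hL]) hL]
    linarith [le_max_right U (1 / L)]
  · linarith [le_max_left U (1 / L)]

lemma one_div_mul_le_toReal_and_toReal_le_mul {μ : ℝ≥0∞} {L U C' f : ℝ} (hC' : 0 < C')
    (hf : 0 ≤ f) (hLC : 1 / C' ≤ L) (hUC : U ≤ C') (hlow : ENNReal.ofReal (L * f) ≤ μ)
    (hupp : μ ≤ ENNReal.ofReal (U * f)) : 1 / C' * f ≤ μ.toReal ∧ μ.toReal ≤ C' * f := by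
  have hμ : μ ≠ ⊤ := ne_top_of_le_ne_top ENNReal.ofReal_ne_top hupp
  have hUf : U * f ≤ C' * f := mul_le_mul_of_nonneg_right hUC hf
  refine ⟨?_, ?_⟩
  · exact (mul_le_mul_of_nonneg_right hLC hf).trans
      ((ENNReal.ofReal_le_iff_le_toReal hμ).mp hlow)
  · exact ENNReal.toReal_le_of_le_ofReal (by positivity) (hupp.trans (ENNReal.ofReal_le_ofReal hUf))

/-- volume of sup-norm neighborhoods of bi-Lipschitz images.
(1) For `1 ≤ d0 ≤ d` there is `C' > 1` (depending only on `C, d, d0`) such that for every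
injective `φ : ℝ^{d0} → ℝ^d` with `φ, φ⁻¹` both `C`-Lipschitz (sup norms), and all
`0 < h ≤ a ≤ 1`, the neighborhood `B(φ((0,a)^{d0}), h)` has volume between
`(1/C') a^{d0} h^{d-d0}` and `C' a^{d0} h^{d-d0}`.
(2) For injective `ψ : ℝ^d → ℝ^d` with `ψ, ψ⁻¹` both `C`-Lipschitz, there is `C' > 1`
(depending only on `C, d`) such that `(1/C') h ≤ Vol(B(ψ(∂B(0,1)), h)) ≤ C' h` for
`h ∈ (0,1)`. -/
theorem volume_thickening_bilipschitz_image
    (d : ℕ) (hd : 1 ≤ d) (C : ℝ) (hC : 1 ≤ C) :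
    (∀ d0 : ℕ, 1 ≤ d0 → d0 ≤ d → ∃ C' : ℝ, 1 < C' ∧
      ∀ φ : (Fin d0 → ℝ) → (Fin d → ℝ), Function.Injective φ →
        (∀ u v, dist (φ u) (φ v) ≤ C * dist u v) →
        (∀ u v, dist u v ≤ C * dist (φ u) (φ v)) →
        ∀ a h : ℝ, 0 < h → h ≤ a → a ≤ 1 →
          (1 / C') * a ^ d0 * h ^ (d - d0) ≤
              (volume (Metric.thickening h
                (φ '' {u : Fin d0 → ℝ | ∀ k, u k ∈ Set.Ioo (0 : ℝ) a}))).toReal ∧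
            (volume (Metric.thickening h
                (φ '' {u : Fin d0 → ℝ | ∀ k, u k ∈ Set.Ioo (0 : ℝ) a}))).toReal ≤
              C' * a ^ d0 * h ^ (d - d0)) ∧
    (∃ C' : ℝ, 1 < C' ∧
      ∀ ψ : (Fin d → ℝ) → (Fin d → ℝ), Function.Injective ψ →
        (∀ u v, dist (ψ u) (ψ v) ≤ C * dist u v) →
        (∀ u v, dist u v ≤ C * dist (ψ u) (ψ v)) →
        ∀ h : ℝ, h ∈ Set.Ioo (0 : ℝ) 1 →
          (1 / C') * h ≤
              (volume (Metric.thickening h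
                (ψ '' Metric.sphere (0 : Fin d → ℝ) 1))).toReal ∧
            (volume (Metric.thickening h
                (ψ '' Metric.sphere (0 : Fin d → ℝ) 1))).toReal ≤ C' * h) := by
  lift C to ℝ≥0 using zero_le_one.trans hC
  have hC₀ : (0 : ℝ) < C := zero_lt_one.trans_le hC
  have hK : 0 < C := NNReal.coe_pos.mp hC₀
  refine ⟨fun d₀ _ hd₀ => ?_, ?_⟩
  · obtain ⟨C', hC', hL, hU⟩ :=
      exists_one_lt_one_div_le_and_le (by positivity : (0 : ℝ) < 2 ^ d / (2 * C) ^ d₀)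
        ((2 * (C + 1)) ^ d)
    refine ⟨C', hC', fun φ _ hlip hanti a h hh hha _ => ?_⟩
    simp only [mul_assoc]
    exact one_div_mul_le_toReal_and_toReal_le_mul (by linarith)
      (mul_nonneg (pow_nonneg (hh.le.trans hha) _) (pow_nonneg hh.le _)) hL hU
      (le_volume_thickening_image_cube hd₀ (.of_le_mul_dist hanti) hK hh
        (hh.trans_le hha))
      (volume_thickening_image_cube_le hd₀ (.of_dist_le_mul hlip) hh hha)
  · obtain ⟨C', hC', hL, hU⟩ :=
      exists_one_lt_one_div_le_and_le (by positivity : (0 : ℝ) < 2 ^ d / C ^ (d - 1))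
        (2 * d * 2 ^ (d - 1) * (2 * (C + 1)) ^ d)
    refine ⟨C', hC', fun ψ _ hlip hanti h ⟨hh, h1⟩ => ?_⟩
    exact one_div_mul_le_toReal_and_toReal_le_mul (by linarith) hh.le hL hU
      (le_volume_thickening_image_sphere hd (.of_le_mul_dist hanti) hK hh)
      (volume_thickening_image_sphere_le hd (.of_dist_le_mul hlip) hh (by linarith))

end
end

section
/- There is a universal constant C_1 such that the following holds. Let m ≥ 2, k ≥ 1 be integers, δ_1, …, δ_m ≥ 0, and let X_1, …, X_m be real random variables on a common probability space (no independence assumed) with X_i distributed as a noncentral chi-squared variable with k degrees of freedom and noncentrality δ_i², i.e., X_i has the same law as (Z_1 + δ_i)² + Z_2² + ⋯ + Z_k² where Z_1, …, Z_k are independent standard Gaussians. Let δ_min = min_i δ_i and δ_max = max_i δ_i. Then for any C > C_1 with k ≥ 16 C log m: (a) if δ_min ≥ 2√(C log m), then P( min_{1≤i≤m} X_i < δ_min²/4 + k − 3√(C k log m) ) ≤ 2 m^{1−C/2}; (b) if δ_max ≤ √(C log m), then P( max_{1≤i≤m} X_i > k + 3√(C k log m) ) ≤ m^{1−C/2}.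 -/
/-!
Each `X_i` has the law of `‖z + δ_i e₁‖²` for a standard Gaussian vector `z` in `ℝᵏ`.
Completing the square in the Gaussian density gives its cumulant generating function
`t δ² / (1 - 2t) - (k/2) log (1 - 2t)` for `t < 1/2`. With `L = C log m` and `λ = √(L/k)`,
Chernoff's bound at `t = -λ` bounds the lower tail of each `X_i` at `δ_i²/4 + k - 3√(kL)`
by `e^{-2L}`, and at `t = λ/2` the upper tail at `k + 3√(kL)` by `e^{-L/2}` when `δ_i² ≤ L`.
A union bound over the `m` marginals, which needs no independence, multiplies these by `m`,
and `m e^{-L/2} = m^{1 - C/2}`.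
-/

open MeasureTheory ProbabilityTheory Real

noncomputable section

/-- The noncentral chi-squared law with `k` degrees of freedom and noncentrality `δ²`:
the law of `(Z_1 + δ)² + Z_2² + ⋯ + Z_k²` for independent standard Gaussians `Z_j`. -/
def ncChiSqLaw (k : ℕ) (δ : ℝ) : Measure ℝ :=
  Measure.map (fun z : Fin k → ℝ => ∑ j, (z j + if (j : ℕ) = 0 then δ else 0) ^ 2)
    (Measure.pi fun _ : Fin k => gaussianReal 0 1)

section CumulantGeneratingFunction

variable {t : ℝ}

lemma gaussianPDFReal_mul_exp_mul_sq_add (ht : t < 1 / 2) (a x : ℝ) :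
    gaussianPDFReal 0 1 x * exp (t * (x + a) ^ 2)
      = exp (t * a ^ 2 / (1 - 2 * t) - log (1 - 2 * t) / 2)
        * gaussianPDFReal (2 * t * a / (1 - 2 * t)) (1 - 2 * t)⁻¹.toNNReal x := by
  have h : 0 < 1 - 2 * t := by linarith
  have hsqrt : exp (log (1 - 2 * t) / 2) = √(1 - 2 * t) := by
    rw [sqrt_eq_rpow, rpow_def_of_pos h]; ring_nf
  have hexp : exp (-(x - 0) ^ 2 / (2 * 1)) * exp (t * (x + a) ^ 2)
      = exp (t * a ^ 2 / (1 - 2 * t)) *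
        exp (-(x - 2 * t * a / (1 - 2 * t)) ^ 2 / (2 * (1 - 2 * t)⁻¹)) := by
    rw [← exp_add, ← exp_add]; congr 1; field_simp; ring
  simp only [gaussianPDFReal, NNReal.coe_one, Real.coe_toNNReal _ (inv_pos.2 h).le]
  rw [exp_sub, hsqrt, mul_assoc, hexp, mul_one (2 * π), sqrt_mul (by positivity) (1 - 2 * t)⁻¹,
    sqrt_inv]
  have : 0 < √(1 - 2 * t) := sqrt_pos.2 h
  field_simp

lemma integrable_exp_mul_sq_add_gaussianReal (ht : t < 1 / 2) (a : ℝ) :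
    Integrable (fun x => exp (t * (x + a) ^ 2)) (gaussianReal 0 1) := by
  rw [gaussianReal_of_var_ne_zero _ one_ne_zero, integrable_withDensity_iff_integrable_smul'
    (measurable_gaussianPDF 0 1) (ae_of_all _ fun _ => gaussianPDF_lt_top)]
  simp only [gaussianPDF, ENNReal.toReal_ofReal (gaussianPDFReal_nonneg 0 1 _), smul_eq_mul,
    gaussianPDFReal_mul_exp_mul_sq_add ht]
  exact (integrable_gaussianPDFReal _ _).const_mul _

lemma integral_exp_mul_sq_add_gaussianReal (ht : t < 1 / 2) (a : ℝ) :
    ∫ x, exp (t * (x + a) ^ 2) ∂gaussianReal 0 1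
      = exp (t * a ^ 2 / (1 - 2 * t) - log (1 - 2 * t) / 2) := by
  have h : 0 < 1 - 2 * t := by linarith
  rw [integral_gaussianReal_eq_integral_smul one_ne_zero]
  simp only [smul_eq_mul, gaussianPDFReal_mul_exp_mul_sq_add ht, integral_const_mul]
  rw [integral_gaussianPDFReal_eq_one _ (by simpa using h), mul_one]

section StandardGaussianVector

variable {ι : Type*} [Fintype ι]

lemma exp_mul_sum_sq_add (a z : ι → ℝ) :
    exp (t * ∑ j, (z j + a j) ^ 2) = ∏ j, exp (t * (z j + a j) ^ 2) := by
  rw [Finset.mul_sum, exp_sum]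

lemma integrable_exp_mul_sum_sq_add_pi (ht : t < 1 / 2) (a : ι → ℝ) :
    Integrable (fun z : ι → ℝ => exp (t * ∑ j, (z j + a j) ^ 2))
      (Measure.pi fun _ => gaussianReal 0 1) := by
  simp only [exp_mul_sum_sq_add]
  exact Integrable.fintype_prod (f := fun j x => exp (t * (x + a j) ^ 2))
    fun j => integrable_exp_mul_sq_add_gaussianReal ht (a j)

lemma mgf_sum_sq_add_pi (ht : t < 1 / 2) (a : ι → ℝ) :
    mgf (fun z : ι → ℝ => ∑ j, (z j + a j) ^ 2) (Measure.pi fun _ => gaussianReal 0 1) t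
      = exp (t * (∑ j, a j ^ 2) / (1 - 2 * t) - Fintype.card ι / 2 * log (1 - 2 * t)) := by
  rw [mgf]
  simp only [exp_mul_sum_sq_add]
  rw [integral_fintype_prod_eq_prod (fun j x => exp (t * (x + a j) ^ 2))]
  simp only [integral_exp_mul_sq_add_gaussianReal ht, ← exp_sum, Finset.sum_sub_distrib,
    ← Finset.sum_div, ← Finset.mul_sum, Finset.sum_const, Finset.card_univ, nsmul_eq_mul]
  ring_nf

end StandardGaussianVector

lemma measurable_ncChiSq_sum (k : ℕ) (δ : ℝ) :
    Measurable (fun z : Fin k → ℝ => ∑ j, (z j + if (j : ℕ) = 0 then δ else 0) ^ 2) := by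
  fun_prop

lemma sum_sq_ite_val_eq_zero {k : ℕ} (hk : k ≠ 0) (δ : ℝ) :
    ∑ j : Fin k, (if (j : ℕ) = 0 then δ else 0) ^ 2 = δ ^ 2 := by
  obtain ⟨n, rfl⟩ := Nat.exists_eq_succ_of_ne_zero hk
  simp

instance (k : ℕ) (δ : ℝ) : IsProbabilityMeasure (ncChiSqLaw k δ) :=
  Measure.isProbabilityMeasure_map (measurable_ncChiSq_sum k δ).aemeasurable

lemma integrable_exp_mul_ncChiSqLaw (ht : t < 1 / 2) (k : ℕ) (δ : ℝ) :
    Integrable (fun x => exp (t * x)) (ncChiSqLaw k δ) :=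
  (integrable_map_measure (by fun_prop) (measurable_ncChiSq_sum k δ).aemeasurable).2
    (integrable_exp_mul_sum_sq_add_pi ht _)

lemma cgf_id_ncChiSqLaw (ht : t < 1 / 2) {k : ℕ} (hk : k ≠ 0) (δ : ℝ) :
    cgf id (ncChiSqLaw k δ) t = t * δ ^ 2 / (1 - 2 * t) - k / 2 * log (1 - 2 * t) := by
  rw [cgf, ncChiSqLaw, mgf_id_map (measurable_ncChiSq_sum k δ).aemeasurable,
    mgf_sum_sq_add_pi ht, log_exp, sum_sq_ite_val_eq_zero hk, Fintype.card_fin]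

end CumulantGeneratingFunction

lemma sqrt_mul_div_mul_sqrt_mul {k L : ℝ} (hk : 0 < k) (hL : 0 ≤ L) :
    √(k * L) / k * √(k * L) = L := by
  rw [div_mul_eq_mul_div, ← sq, sq_sqrt (by positivity), mul_div_cancel_left₀ L hk.ne']

lemma ncChiSqLaw_real_Iic_le {k : ℕ} {δ L u : ℝ} (hL : 0 < L) (hLk : L ≤ k)
    (hu : u ≤ δ ^ 2 / 4 + k - 3 * √(k * L)) :
    (ncChiSqLaw k δ).real (Set.Iic u) ≤ exp (-(2 * L)) := by
  have hk : (0 : ℝ) < k := hL.trans_le hLk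
  set S := √(k * L)
  set lam := S / k
  have hS : 0 < S := sqrt_pos.2 (by positivity)
  have hlamk : lam * k = S := div_mul_cancel₀ S hk.ne'
  have hlamS : lam * S = L := sqrt_mul_div_mul_sqrt_mul hk hL.le
  have hlam0 : 0 < lam := by positivity
  have hlam1 : lam ≤ 1 := by nlinarith
  have hlog : k * lam / (1 + lam) ≤ k / 2 * log (1 + 2 * lam) := by
    calc k * lam / (1 + lam) = k / 2 * (2 * (2 * lam) / (2 * lam + 2)) := by field_simp; ring
      _ ≤ k / 2 * log (1 + 2 * lam) := by gcongr; exact le_log_one_add_of_nonneg (by positivity)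
  have hfrac : S - L ≤ k * lam / (1 + lam) := by
    rw [le_div_iff₀ (by positivity), ← hlamk, ← hlamS]
    nlinarith [mul_pos hlam0 hk]
  have hlin : lam * u ≤ lam * δ ^ 2 / 4 + S - 3 * L :=
    (mul_le_mul_of_nonneg_left hu hlam0.le).trans_eq (by linear_combination hlamk - 3 * hlamS)
  have hshift : lam * δ ^ 2 / 4 ≤ lam * δ ^ 2 / (1 + 2 * lam) :=
    div_le_div_of_nonneg_left (by positivity) (by positivity) (by linarith)
  calc (ncChiSqLaw k δ).real (Set.Iic u)
      ≤ exp (-(-lam) * u + cgf id (ncChiSqLaw k δ) (-lam)) :=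
        measure_le_le_exp_cgf u (by linarith) (integrable_exp_mul_ncChiSqLaw (by linarith) k δ)
    _ = exp (lam * u - lam * δ ^ 2 / (1 + 2 * lam) - k / 2 * log (1 + 2 * lam)) := by
        rw [cgf_id_ncChiSqLaw (by linarith) (by exact_mod_cast hk.ne') δ]; ring_nf
    _ ≤ exp (-(2 * L)) := by
        gcongr
        linarith

lemma ncChiSqLaw_real_Ici_le {k : ℕ} {δ L u : ℝ} (hL : 0 < L) (hLk : 9 * L ≤ k)
    (hδ : δ ^ 2 ≤ L) (hu : k + 3 * √(k * L) ≤ u) :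
    (ncChiSqLaw k δ).real (Set.Ici u) ≤ exp (-(L / 2)) := by
  have hk : (0 : ℝ) < k := by linarith
  set S := √(k * L)
  set lam := S / k
  have hS : 0 < S := sqrt_pos.2 (by positivity)
  have hlamk : lam * k = S := div_mul_cancel₀ S hk.ne'
  have hlamS : lam * S = L := sqrt_mul_div_mul_sqrt_mul hk hL.le
  have hlam0 : 0 < lam := by positivity
  have hlam3 : lam ≤ 1 / 3 := by nlinarith
  have hlam1 : 0 < 1 - lam := by linarith
  have hlog : -log (1 - lam) ≤ lam / (1 - lam) := by
    have h := one_sub_inv_le_log_of_pos hlam1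
    have : lam / (1 - lam) = (1 - lam)⁻¹ - 1 := by field_simp; ring
    linarith
  have hlin : S / 2 + 3 * L / 2 ≤ lam / 2 * u :=
    (mul_le_mul_of_nonneg_left hu (by positivity)).trans_eq'
      (by linear_combination hlamk / 2 + 3 * hlamS / 2)
  have hfrac : (lam * δ ^ 2 + lam * k) / (1 - lam) ≤ S + 2 * L := by
    rw [div_le_iff₀ hlam1, hlamk]
    nlinarith [mul_le_mul_of_nonneg_left hδ hlam0.le, mul_le_mul_of_nonneg_right hlam3 hL.le]
  have hsplit : lam / 2 * δ ^ 2 / (1 - lam) + k / 2 * (lam / (1 - lam))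
      = (lam * δ ^ 2 + lam * k) / (1 - lam) / 2 := by ring
  have hlogk := mul_le_mul_of_nonneg_left hlog (by positivity : (0 : ℝ) ≤ k / 2)
  calc (ncChiSqLaw k δ).real (Set.Ici u)
      ≤ exp (-(lam / 2) * u + cgf id (ncChiSqLaw k δ) (lam / 2)) :=
        measure_ge_le_exp_cgf u (by positivity) (integrable_exp_mul_ncChiSqLaw (by linarith) k δ)
    _ = exp (-(lam / 2) * u + lam / 2 * δ ^ 2 / (1 - lam) - k / 2 * log (1 - lam)) := by
        rw [cgf_id_ncChiSqLaw (by linarith) (by exact_mod_cast hk.ne') δ]; ring_nf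
    _ ≤ exp (-(L / 2)) := by
        gcongr
        linarith

section UnionBound

variable {Ω ι : Type*} [MeasurableSpace Ω] [Fintype ι] {P : Measure Ω} [IsFiniteMeasure P]
  {X : ι → Ω → ℝ}

lemma measure_iUnion_preimage_le (hX : ∀ i, AEMeasurable (X i) P) {s : Set ℝ}
    (hs : MeasurableSet s) {ε : ℝ} (hε : ∀ i, (P.map (X i)).real s ≤ ε) :
    P (⋃ i, X i ⁻¹' s) ≤ ENNReal.ofReal (Fintype.card ι * ε) :=
  calc P (⋃ i, X i ⁻¹' s) ≤ ∑ i, P (X i ⁻¹' s) := measure_iUnion_fintype_le _ _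
    _ ≤ ∑ _i : ι, ENNReal.ofReal ε := Finset.sum_le_sum fun i _ => by
        rw [← Measure.map_apply_of_aemeasurable (hX i) hs, ← ofReal_measureReal]
        exact ENNReal.ofReal_le_ofReal (hε i)
    _ = ENNReal.ofReal (Fintype.card ι * ε) := by
        rw [Finset.sum_const, Finset.card_univ, nsmul_eq_mul,
          ENNReal.ofReal_mul (Nat.cast_nonneg _), ENNReal.ofReal_natCast]

variable [Nonempty ι]

lemma measure_iInf_lt_le (hX : ∀ i, AEMeasurable (X i) P) {u ε : ℝ}
    (hε : ∀ i, (P.map (X i)).real (Set.Iic u) ≤ ε) :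
    P {ω | ⨅ i, X i ω < u} ≤ ENNReal.ofReal (Fintype.card ι * ε) := by
  refine (measure_mono fun ω (hω : ⨅ i, X i ω < u) => ?_).trans
    (measure_iUnion_preimage_le hX measurableSet_Iic hε)
  obtain ⟨i, hi⟩ := exists_lt_of_ciInf_lt hω
  exact Set.mem_iUnion.2 ⟨i, hi.le⟩

lemma measure_lt_iSup_le (hX : ∀ i, AEMeasurable (X i) P) {u ε : ℝ}
    (hε : ∀ i, (P.map (X i)).real (Set.Ici u) ≤ ε) :
    P {ω | u < ⨆ i, X i ω} ≤ ENNReal.ofReal (Fintype.card ι * ε) := by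
  refine (measure_mono fun ω (hω : u < ⨆ i, X i ω) => ?_).trans
    (measure_iUnion_preimage_le hX measurableSet_Ici hε)
  obtain ⟨i, hi⟩ := exists_lt_of_lt_ciSup hω
  exact Set.mem_iUnion.2 ⟨i, hi.le⟩

end UnionBound

/-- maxima and minima of noncentral chi-squared variables.
There is a universal constant `C₁` such that for integers `m ≥ 2`, `k ≥ 1`, noncentrality
parameters `δ_i ≥ 0`, variables `X_i ~ χ²_k(δ_i²)` (no independence assumed), and any
`C > C₁` with `k ≥ 16 C log m`:
(a) if `min_i δ_i ≥ 2√(C log m)` then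
`P(min_i X_i < (min_i δ_i)²/4 + k − 3√(C k log m)) ≤ 2 m^{1−C/2}`;
(b) if `max_i δ_i ≤ √(C log m)` then
`P(max_i X_i > k + 3√(C k log m)) ≤ m^{1−C/2}`. -/
theorem noncentral_chi_squared_max_min_bound :
    ∃ C₁ : ℝ, 0 < C₁ ∧
      ∀ (m k : ℕ), 2 ≤ m → 1 ≤ k →
        ∀ δ : Fin m → ℝ, (∀ i, 0 ≤ δ i) →
          ∀ (Ω : Type) (_ : MeasurableSpace Ω) (P : Measure Ω), IsProbabilityMeasure P →
            ∀ X : Fin m → Ω → ℝ, (∀ i, Measurable (X i)) →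
              (∀ i, Measure.map (X i) P = ncChiSqLaw k (δ i)) →
              ∀ C : ℝ, C₁ < C → (16 : ℝ) * C * Real.log m ≤ k →
                ((2 * Real.sqrt (C * Real.log m) ≤ ⨅ i : Fin m, δ i →
                  P {ω | (⨅ i : Fin m, X i ω) <
                      (⨅ i : Fin m, δ i) ^ 2 / 4 + k - 3 * Real.sqrt (C * k * Real.log m)} ≤
                    ENNReal.ofReal (2 * (m : ℝ) ^ ((1 : ℝ) - C / 2))) ∧
                ((⨆ i : Fin m, δ i) ≤ Real.sqrt (C * Real.log m) →
                  P {ω | (k : ℝ) + 3 * Real.sqrt (C * k * Real.log m) <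
                      ⨆ i : Fin m, X i ω} ≤
                    ENNReal.ofReal ((m : ℝ) ^ ((1 : ℝ) - C / 2)))) := by
  refine ⟨1, one_pos, fun m k hm _ δ hδ Ω _ P _ X hX hlaw C hC hkC => ?_⟩
  have : Nonempty (Fin m) := ⟨⟨0, by omega⟩⟩
  have hm : (1 : ℝ) < m := by exact_mod_cast hm
  set L := C * log m with hLdef
  have hL : 0 < L := mul_pos (by linarith) (log_pos hm)
  have hLk : 16 * L ≤ k := by rwa [hLdef, ← mul_assoc]
  have hmL : (m : ℝ) * exp (-(L / 2)) = (m : ℝ) ^ ((1 : ℝ) - C / 2) := by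
    rw [rpow_def_of_pos (by linarith), show log m * (1 - C / 2) = log m + -(L / 2) by ring,
      exp_add, exp_log (by linarith)]
  have hXae i := (hX i).aemeasurable (μ := P)
  rw [show √(C * k * log m) = √(k * L) by rw [hLdef]; ring_nf]
  refine ⟨fun hmin => ?_, fun hmax => ?_⟩
  · have hmin0 : 0 ≤ ⨅ i, δ i := (by positivity : 0 ≤ 2 * √L).trans hmin
    refine (measure_iInf_lt_le (ε := exp (-(2 * L))) hXae fun i => ?_).trans
      (ENNReal.ofReal_le_ofReal ?_)
    · rw [hlaw i]
      refine ncChiSqLaw_real_Iic_le hL (by linarith) ?_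
      have := pow_le_pow_left₀ hmin0 (ciInf_le (Finite.bddBelow_range δ) i) 2
      linarith
    · rw [Fintype.card_fin, ← hmL]
      nlinarith [exp_le_exp.2 (by linarith : -(2 * L) ≤ -(L / 2)), exp_pos (-(L / 2))]
  · refine (measure_lt_iSup_le (ε := exp (-(L / 2))) hXae fun i => ?_).trans_eq
      (by rw [Fintype.card_fin, hmL])
    rw [hlaw i]
    refine ncChiSqLaw_real_Ici_le hL (by linarith) ?_ le_rfl
    have := pow_le_pow_left₀ (hδ i) ((le_ciSup (Finite.bddAbove_range δ) i).trans hmax) 2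
    rwa [sq_sqrt hL.le] at this
end
end

section
/- Fix an integer r ≥ 0. There is a constant C > 0 depending only on r such that the following holds: for every integer m ≥ 1 and every subset K ⊆ {−m, …, m} with |K| ≥ r + 1, the (|K| × (r+1)) polynomial regression matrix U with entries U_{k,s} = (k/m)^s for k ∈ K and s = 0, 1, …, r satisfies λ_min(UᵀU) ≥ |K| (|K|/m)^{2r} / C; equivalently, ‖U v‖₂² ≥ (|K| (|K|/m)^{2r} / C) ‖v‖₂² for every v ∈ ℝ^{r+1}. -/
open scoped BigOperators

noncomputable section

open Polynomial Finset

section Aux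

lemma coeff_prod_linear_bound {ι : Type*} [DecidableEq ι] (t : Finset ι) (b : ι → ℝ)
    (hb : ∀ j ∈ t, |b j| ≤ 1) :
    ∀ s, |(∏ j ∈ t, (X - C (b j))).coeff s| ≤ 2 ^ t.card := by
  induction t using Finset.induction_on with
  | empty => intro s; simp [Polynomial.coeff_one]; split <;> simp
  | @insert a t ha ih =>
    intro s
    have hba : |b a| ≤ 1 := hb a (mem_insert_self a t)
    have ih' := ih (fun j hj => hb j (mem_insert_of_mem hj))
    rw [Finset.prod_insert ha, card_insert_of_notMem ha]
    have hq := ih'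
    set q := ∏ j ∈ t, (X - C (b j)) with hqdef
    have h1 : ((X - C (b a)) * q).coeff s = (X * q).coeff s - b a * q.coeff s := by
      rw [sub_mul, Polynomial.coeff_sub, Polynomial.coeff_C_mul]
    rw [h1]
    have h2 : |(X * q).coeff s| ≤ 2 ^ t.card := by
      cases s with
      | zero =>
        simp [Polynomial.mul_coeff_zero]
      | succ n => rw [Polynomial.coeff_X_mul]; exact hq n
    have h3 : |b a * q.coeff s| ≤ 2 ^ t.card := by
      rw [abs_mul]
      calc |b a| * |q.coeff s| ≤ 1 * 2 ^ t.card :=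
            mul_le_mul hba (hq s) (abs_nonneg _) zero_le_one
        _ = 2 ^ t.card := one_mul _
    calc |(X * q).coeff s - b a * q.coeff s| ≤ |(X * q).coeff s| + |b a * q.coeff s| :=
          abs_sub _ _
      _ ≤ 2 ^ t.card + 2 ^ t.card := add_le_add h2 h3
      _ = 2 ^ (t.card + 1) := by ring

lemma key_vandermonde (r : ℕ) (x : Fin (r+1) → ℝ) (δ : ℝ) (hδ : 0 < δ)
    (hx1 : ∀ i, |x i| ≤ 1) (hsep : ∀ i j, i ≠ j → δ ≤ |x i - x j|)
    (v : Fin (r+1) → ℝ) :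
    δ ^ (2*r) * ∑ s, v s ^ 2 ≤
      ((r+1:ℝ)^2 * 4^r) * ∑ i, (∑ s : Fin (r+1), v s * x i ^ (s:ℕ)) ^ 2 := by
  have hinj : Set.InjOn x (Finset.univ : Finset (Fin (r+1))) := by
    intro i _ j _ hij
    by_contra h
    have := hsep i j h
    rw [sub_eq_zero.mpr hij] at this
    simp at this; linarith
  set p : ℝ[X] := ∑ s : Fin (r+1), C (v s) * X ^ (s:ℕ) with hp
  have hdeg : p.degree < (Finset.univ : Finset (Fin (r+1))).card := by
    rw [Finset.card_univ, Fintype.card_fin]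
    refine lt_of_le_of_lt (Polynomial.degree_sum_le _ _) ?_
    rw [Finset.sup_lt_iff (by exact_mod_cast WithBot.bot_lt_coe (r+1))]
    intro s _
    refine lt_of_le_of_lt (Polynomial.degree_C_mul_X_pow_le _ _) ?_
    exact_mod_cast Nat.lt_succ_of_le (Nat.lt_succ_iff.mp s.isLt)
  have heval : ∀ t : ℝ, p.eval t = ∑ s : Fin (r+1), v s * t ^ (s:ℕ) := by
    intro t; rw [hp, Polynomial.eval_finset_sum]; simp
  have hcoeff : ∀ s : Fin (r+1), p.coeff (s:ℕ) = v s := by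
    intro s
    rw [hp, Polynomial.finset_sum_coeff]
    rw [Finset.sum_eq_single s]
    · simp
    · intro b _ hbs
      rw [Polynomial.coeff_C_mul, Polynomial.coeff_X_pow, if_neg, mul_zero]
      exact fun h => hbs (Fin.ext h.symm)
    · simp
  have hinterp := Lagrange.eq_interpolate hinj hdeg
  -- basis coefficient bound
  have hbasis : ∀ (i : Fin (r+1)) (s : ℕ),
      |(Lagrange.basis Finset.univ x i).coeff s| ≤ 2^r / δ^r := by
    intro i s
    have hrw : Lagrange.basis Finset.univ x i =
        C (∏ j ∈ Finset.univ.erase i, (x i - x j)⁻¹) *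
          ∏ j ∈ Finset.univ.erase i, (X - C (x j)) := by
      rw [Lagrange.basis]
      simp only [Lagrange.basisDivisor]
      rw [Finset.prod_mul_distrib, map_prod]
    rw [hrw, Polynomial.coeff_C_mul, abs_mul]
    have hcard : (Finset.univ.erase i).card = r := by
      rw [Finset.card_erase_of_mem (Finset.mem_univ i), Finset.card_univ, Fintype.card_fin]
      simp
    have h1 : |∏ j ∈ Finset.univ.erase i, (x i - x j)⁻¹| ≤ (δ⁻¹)^r := by
      rw [Finset.abs_prod]
      calc ∏ j ∈ Finset.univ.erase i, |(x i - x j)⁻¹|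
          ≤ ∏ _j ∈ Finset.univ.erase i, δ⁻¹ := by
            refine Finset.prod_le_prod (fun j _ => abs_nonneg _) ?_
            intro j hj
            rw [abs_inv]
            exact inv_anti₀ hδ (hsep i j (Finset.ne_of_mem_erase hj).symm)
        _ = (δ⁻¹)^r := by rw [Finset.prod_const, hcard]
    have h2 : |(∏ j ∈ Finset.univ.erase i, (X - C (x j))).coeff s| ≤ 2^r := by
      have := coeff_prod_linear_bound (Finset.univ.erase i) x (fun j _ => hx1 j) s
      rwa [hcard] at this
    calc |∏ j ∈ Finset.univ.erase i, (x i - x j)⁻¹| *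
          |(∏ j ∈ Finset.univ.erase i, (X - C (x j))).coeff s|
        ≤ (δ⁻¹)^r * 2^r := by
          exact mul_le_mul h1 h2 (abs_nonneg _) (by positivity)
      _ = 2^r / δ^r := by rw [inv_pow]; ring
  set y : Fin (r+1) → ℝ := fun i => ∑ s : Fin (r+1), v s * x i ^ (s:ℕ) with hy
  have hv : ∀ s : Fin (r+1), v s = ∑ i, y i * (Lagrange.basis Finset.univ x i).coeff (s:ℕ) := by
    intro s
    conv_lhs => rw [← hcoeff s, hinterp]
    rw [Lagrange.interpolate_apply, Polynomial.finset_sum_coeff]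
    refine Finset.sum_congr rfl fun i _ => ?_
    rw [Polynomial.coeff_C_mul, heval]
  -- now bound
  have hvbound : ∀ s : Fin (r+1), |v s| ≤ (2^r / δ^r) * ∑ i, |y i| := by
    intro s
    rw [hv s]
    calc |∑ i, y i * (Lagrange.basis Finset.univ x i).coeff (s:ℕ)|
        ≤ ∑ i, |y i * (Lagrange.basis Finset.univ x i).coeff (s:ℕ)| :=
          Finset.abs_sum_le_sum_abs _ _
      _ ≤ ∑ i, |y i| * (2^r / δ^r) := by
          refine Finset.sum_le_sum fun i _ => ?_
          rw [abs_mul]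
          exact mul_le_mul_of_nonneg_left (hbasis i s) (abs_nonneg _)
      _ = (2^r / δ^r) * ∑ i, |y i| := by rw [← Finset.sum_mul]; ring
  have hcs : (∑ i, |y i|)^2 ≤ (r+1 : ℝ) * ∑ i, y i ^ 2 := by
    have h := Finset.sum_mul_sq_le_sq_mul_sq (Finset.univ : Finset (Fin (r+1)))
      (fun _ => (1:ℝ)) (fun i => |y i|)
    simp only [one_mul, one_pow, Finset.sum_const, Finset.card_univ, Fintype.card_fin,
      nsmul_eq_mul, sq_abs] at h
    calc (∑ i, |y i|)^2 ≤ (↑(r+1) * 1) * ∑ i, y i ^2 := by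
          refine le_trans h (le_of_eq ?_); push_cast; ring
      _ = (r+1:ℝ) * ∑ i, y i ^2 := by push_cast; ring
  have hsum : ∑ s : Fin (r+1), v s ^2 ≤
      (r+1:ℝ) * ((2^r/δ^r)^2 * ((r+1:ℝ) * ∑ i, y i ^2)) := by
    calc ∑ s : Fin (r+1), v s ^2
        ≤ ∑ _s : Fin (r+1), (2^r/δ^r)^2 * ((r+1:ℝ) * ∑ i, y i ^2) := by
          refine Finset.sum_le_sum fun s _ => ?_
          calc v s ^2 = |v s|^2 := (sq_abs _).symm
            _ ≤ ((2^r/δ^r) * ∑ i, |y i|)^2 := by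
                refine pow_le_pow_left₀ (abs_nonneg _) (hvbound s) 2
            _ = (2^r/δ^r)^2 * (∑ i, |y i|)^2 := by ring
            _ ≤ (2^r/δ^r)^2 * ((r+1:ℝ) * ∑ i, y i ^2) := by
                refine mul_le_mul_of_nonneg_left hcs (by positivity)
      _ = (r+1:ℝ) * ((2^r/δ^r)^2 * ((r+1:ℝ) * ∑ i, y i ^2)) := by
          rw [Finset.sum_const, Finset.card_univ, Fintype.card_fin]
          push_cast; ring
  have hδr : (0:ℝ) < δ^r := by positivity
  have key : δ^(2*r) * ∑ s, v s ^2 ≤ δ^(2*r) *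
      ((r+1:ℝ) * ((2^r/δ^r)^2 * ((r+1:ℝ) * ∑ i, y i ^2))) :=
    mul_le_mul_of_nonneg_left hsum (by positivity)
  calc δ^(2*r) * ∑ s, v s ^2
      ≤ δ^(2*r) * ((r+1:ℝ) * ((2^r/δ^r)^2 * ((r+1:ℝ) * ∑ i, y i ^2))) := key
    _ = ((r+1:ℝ)^2 * 4^r) * ∑ i, y i ^2 := by
        have h5 : δ^(2*r) = (δ^r)^2 := by rw [mul_comm, pow_mul]
        have h4 : (4:ℝ)^r = (2^r)^2 := by
          rw [show (4:ℝ) = 2^2 by norm_num, ← pow_mul, mul_comm, pow_mul]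
        rw [h5, h4]
        field_simp

lemma strictMono_int_gap {n : ℕ} (f : Fin n → ℤ) (hf : StrictMono f)
    (a b : Fin n) (hab : (a:ℕ) ≤ (b:ℕ)) : ((b:ℕ):ℤ) - ((a:ℕ):ℤ) ≤ f b - f a := by
  have aux : ∀ k : ℕ, ∀ h : (a:ℕ) + k < n, (k:ℤ) ≤ f ⟨(a:ℕ)+k, h⟩ - f a := by
    intro k
    induction k with
    | zero => intro h; simp
    | succ k ih =>
      intro h
      have hk' : (a:ℕ) + k < n := by omega
      have h1 := ih hk'
      have h2 : f ⟨(a:ℕ)+k, hk'⟩ < f ⟨(a:ℕ)+(k+1), h⟩ := by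
        apply hf
        simp [Fin.lt_def]
      have h3 := Int.add_one_le_iff.mpr h2
      push_cast
      omega
  obtain ⟨k, hk⟩ := Nat.exists_eq_add_of_le hab
  have hb : b = ⟨(a:ℕ)+k, by omega⟩ := by
    apply Fin.ext; simp [hk]
  rw [hb]
  have := aux k (by omega)
  omega

set_option maxHeartbeats 1000000 in
lemma selection_bound (r m : ℕ) (hm : 1 ≤ m) (K : Finset ℤ) (hK : ∀ k ∈ K, |k| ≤ (m:ℤ))
    (t g : ℕ) (ht : 1 ≤ t) (hg : 1 ≤ g) (htg : t ≤ g) (hsel : t + g * r ≤ K.card)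
    (v : Fin (r+1) → ℝ) :
    (t:ℝ) * ((g:ℝ)/m)^(2*r) / ((r+1:ℝ)^2*4^r) * ∑ s, v s ^ 2 ≤
      ∑ k ∈ K, (∑ s : Fin (r+1), v s * ((k:ℝ)/m)^(s:ℕ))^2 := by
  set n := K.card with hn
  set F : ℤ → ℝ := fun k => (∑ s : Fin (r+1), v s * ((k:ℝ)/m)^(s:ℕ))^2 with hF
  have hFnonneg : ∀ k, 0 ≤ F k := fun k => sq_nonneg _
  set e := K.orderIsoOfFin hn.symm with he
  set σ : Fin n → ℤ := fun i => (e i : ℤ) with hσ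
  have hσmono : StrictMono σ := by
    intro a b hab
    exact_mod_cast (Subtype.coe_lt_coe).mpr (e.strictMono hab)
  have hσK : ∀ i, σ i ∈ K := fun i => (e i).2
  have hmpos : (0:ℝ) < m := by exact_mod_cast hm
  -- rewrite sum over K
  have hsumK : ∑ k ∈ K, F k = ∑ i : Fin n, F (σ i) := by
    rw [← Finset.sum_coe_sort K F]
    exact (Fintype.sum_equiv e.toEquiv _ _ (fun i => rfl)).symm
  -- selection map
  have hidx : ∀ (j : Fin t) (i : Fin (r+1)), (j:ℕ) + g * (i:ℕ) < n := by
    intro j i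
    have h1 : (j:ℕ) < t := j.2
    have h2 : g * (i:ℕ) ≤ g * r := Nat.mul_le_mul_left g (Nat.lt_succ_iff.mp i.2)
    omega
  set ι : Fin t × Fin (r+1) → Fin n := fun p => ⟨(p.1:ℕ) + g * (p.2:ℕ), hidx p.1 p.2⟩ with hι
  have hinj : ∀ p q : Fin t × Fin (r+1), ι p = ι q → p = q := by
    intro ⟨j, i⟩ ⟨j', i'⟩ hpq
    have hval : (j:ℕ) + g * (i:ℕ) = (j':ℕ) + g * (i':ℕ) := congrArg Fin.val hpq
    have hj : (j:ℕ) = (j':ℕ) := by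
      have h1 : ((j:ℕ) + g * (i:ℕ)) % g = (j:ℕ) % g := by
        rw [Nat.add_mul_mod_self_left]
      have h2 : ((j':ℕ) + g * (i':ℕ)) % g = (j':ℕ) % g := by
        rw [Nat.add_mul_mod_self_left]
      have h3 : (j:ℕ) % g = (j:ℕ) := Nat.mod_eq_of_lt (lt_of_lt_of_le j.2 htg)
      have h4 : (j':ℕ) % g = (j':ℕ) := Nat.mod_eq_of_lt (lt_of_lt_of_le j'.2 htg)
      rw [hval] at h1
      omega
    have hi : (i:ℕ) = (i':ℕ) := by
      have : g * (i:ℕ) = g * (i':ℕ) := by omega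
      exact Nat.eq_of_mul_eq_mul_left (by omega) this
    exact Prod.ext (Fin.ext hj) (Fin.ext hi)
  -- per-selection lower bound
  have hjsel : ∀ j : Fin t,
      ((g:ℝ)/m)^(2*r) / ((r+1:ℝ)^2*4^r) * ∑ s, v s ^ 2 ≤
        ∑ i : Fin (r+1), F (σ (ι (j, i))) := by
    intro j
    set x : Fin (r+1) → ℝ := fun i => ((σ (ι (j,i)) : ℤ) : ℝ)/m with hx
    have hx1 : ∀ i, |x i| ≤ 1 := by
      intro i
      rw [hx, abs_div, abs_of_pos hmpos, div_le_one hmpos]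
      have := hK _ (hσK (ι (j,i)))
      exact_mod_cast this
    have hmain : ∀ i i' : Fin (r+1), (i:ℕ) < (i':ℕ) → (g:ℝ)/m ≤ x i' - x i := by
      intro i i' hii
      have hle : ((ι (j,i) : Fin n) : ℕ) ≤ ((ι (j,i') : Fin n) : ℕ) := by
        simp only [hι]
        have : g * (i:ℕ) ≤ g * (i':ℕ) := Nat.mul_le_mul_left g (le_of_lt hii)
        omega
      have hgap := strictMono_int_gap σ hσmono _ _ hle
      have hvals : (((ι (j,i') : Fin n) : ℕ) : ℤ) - (((ι (j,i) : Fin n) : ℕ) : ℤ) = g * ((i':ℕ) - (i:ℕ) : ℤ) := by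
        simp only [hι]
        push_cast
        ring
      have hgeg : (g:ℤ) ≤ σ (ι (j,i')) - σ (ι (j,i)) := by
        have h1 : (g:ℤ) * 1 ≤ (g:ℤ) * ((i':ℕ) - (i:ℕ) : ℤ) := by
          apply mul_le_mul_of_nonneg_left _ (by positivity)
          omega
        rw [hvals] at hgap
        omega
      have hgegR : (g:ℝ) ≤ ((σ (ι (j,i')) : ℤ) : ℝ) - ((σ (ι (j,i)) : ℤ) : ℝ) := by
        exact_mod_cast hgeg
      rw [hx, div_sub_div_same]
      gcongr
    have hδ : (0:ℝ) < (g:ℝ)/m := by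
      have : (0:ℝ) < g := by exact_mod_cast hg
      positivity
    have hsep : ∀ i i' : Fin (r+1), i ≠ i' → (g:ℝ)/m ≤ |x i - x i'| := by
      intro i i' hne
      rcases lt_or_gt_of_ne (show (i:ℕ) ≠ (i':ℕ) from fun h => hne (Fin.ext h)) with h | h
      · rw [abs_sub_comm]
        exact (hmain i i' h).trans (le_abs_self _)
      · exact (hmain i' i h).trans (le_abs_self _)
    have hkey := key_vandermonde r x ((g:ℝ)/m) hδ hx1 hsep v
    have hC1 : (0:ℝ) < (r+1:ℝ)^2*4^r := by positivity
    rw [div_mul_eq_mul_div, div_le_iff₀ hC1]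
    calc ((g:ℝ)/m)^(2*r) * ∑ s, v s ^ 2
        ≤ ((r+1:ℝ)^2 * 4^r) * ∑ i, (∑ s : Fin (r+1), v s * x i ^ (s:ℕ)) ^ 2 := hkey
      _ = (∑ i : Fin (r+1), F (σ (ι (j, i)))) * ((r+1:ℝ)^2*4^r) := by
          rw [mul_comm]
  have hS : (0:ℝ) ≤ ∑ s, v s ^ 2 := Finset.sum_nonneg fun s _ => sq_nonneg _
  calc (t:ℝ) * ((g:ℝ)/m)^(2*r) / ((r+1:ℝ)^2*4^r) * ∑ s, v s ^ 2
      = ∑ _j : Fin t, ((g:ℝ)/m)^(2*r) / ((r+1:ℝ)^2*4^r) * ∑ s, v s ^ 2 := by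
        rw [Finset.sum_const, Finset.card_univ, Fintype.card_fin, nsmul_eq_mul]
        ring
    _ ≤ ∑ j : Fin t, ∑ i : Fin (r+1), F (σ (ι (j, i))) :=
        Finset.sum_le_sum fun j _ => hjsel j
    _ = ∑ p : Fin t × Fin (r+1), F (σ (ι p)) := by rw [Fintype.sum_prod_type]
    _ = ∑ b ∈ Finset.image ι Finset.univ, F (σ b) :=
        (Finset.sum_image (f := fun b => F (σ b)) (g := ι)
          (fun p _ q _ h => hinj p q h)).symm
    _ ≤ ∑ b : Fin n, F (σ b) :=
        Finset.sum_le_sum_of_subset_of_nonneg (Finset.subset_univ _)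
          (fun b _ _ => hFnonneg _)
    _ = ∑ k ∈ K, F k := hsumK.symm

lemma final_combine (r m : ℕ) (hm : 1 ≤ m) (K : Finset ℤ) (hK : ∀ k ∈ K, |k| ≤ (m:ℤ))
    (t g : ℕ) (ht : 1 ≤ t) (hg : 1 ≤ g) (htg : t ≤ g) (hsel : t + g * r ≤ K.card)
    (hn_t : K.card ≤ 2*(2*r+1)*t) (hn_g : K.card ≤ 2*(2*r+1)*g)
    (v : Fin (r+1) → ℝ) :
    ((K.card:ℝ) * ((K.card:ℝ)/m)^(2*r) /
        (((r:ℝ)+1)^2*4^r * (2^(2*r+1)*(2*(r:ℝ)+1)^(2*r+1)))) * ∑ s, v s ^ 2 ≤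
      ∑ k ∈ K, (∑ s : Fin (r+1), v s * ((k:ℝ)/m)^(s:ℕ))^2 := by
  have hC1 : (0:ℝ) < ((r:ℝ)+1)^2*4^r := by positivity
  have hC : (0:ℝ) < ((r:ℝ)+1)^2*4^r * (2^(2*r+1)*(2*(r:ℝ)+1)^(2*r+1)) := by positivity
  have hS : (0:ℝ) ≤ ∑ s, v s ^ 2 := Finset.sum_nonneg fun s _ => sq_nonneg _
  have hL := selection_bound r m hm K hK t g ht hg htg hsel v
  have natkey : K.card^(2*r+1) ≤ 2^(2*r+1)*(2*r+1)^(2*r+1)*(t*g^(2*r)) := by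
    calc K.card^(2*r+1) = K.card * K.card^(2*r) := by ring
      _ ≤ (2*(2*r+1)*t) * ((2*(2*r+1)*g)^(2*r)) :=
          Nat.mul_le_mul hn_t (Nat.pow_le_pow_left hn_g _)
      _ = 2^(2*r+1)*(2*r+1)^(2*r+1)*(t*g^(2*r)) := by rw [mul_pow, mul_pow]; ring
  have keyR : (K.card:ℝ)^(2*r+1) ≤
      2^(2*r+1)*(2*(r:ℝ)+1)^(2*r+1)*((t:ℝ)*(g:ℝ)^(2*r)) := by
    exact_mod_cast natkey
  have hcore : (K.card:ℝ) * ((K.card:ℝ)/m)^(2*r) /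
      (((r:ℝ)+1)^2*4^r * (2^(2*r+1)*(2*(r:ℝ)+1)^(2*r+1))) ≤
      (t:ℝ) * ((g:ℝ)/m)^(2*r) / (((r:ℝ)+1)^2*4^r) := by
    rw [div_le_div_iff₀ hC hC1]
    calc (K.card:ℝ) * ((K.card:ℝ)/m)^(2*r) * (((r:ℝ)+1)^2*4^r)
        = ((K.card:ℝ)^(2*r+1) * (((r:ℝ)+1)^2*4^r)) * ((1:ℝ)/m)^(2*r) := by
          rw [div_eq_mul_one_div ((K.card:ℝ)) ((m:ℝ)), mul_pow]; ring
      _ ≤ ((2^(2*r+1)*(2*(r:ℝ)+1)^(2*r+1)*((t:ℝ)*(g:ℝ)^(2*r))) * (((r:ℝ)+1)^2*4^r)) *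
            ((1:ℝ)/m)^(2*r) := by
          apply mul_le_mul_of_nonneg_right _ (by positivity)
          exact mul_le_mul_of_nonneg_right keyR (le_of_lt hC1)
      _ = (t:ℝ) * ((g:ℝ)/m)^(2*r) *
            (((r:ℝ)+1)^2*4^r * (2^(2*r+1)*(2*(r:ℝ)+1)^(2*r+1))) := by
          rw [div_eq_mul_one_div ((g:ℝ)) ((m:ℝ)), mul_pow]; ring
  calc ((K.card:ℝ) * ((K.card:ℝ)/m)^(2*r) /
        (((r:ℝ)+1)^2*4^r * (2^(2*r+1)*(2*(r:ℝ)+1)^(2*r+1)))) * ∑ s, v s ^ 2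
      ≤ ((t:ℝ) * ((g:ℝ)/m)^(2*r) / (((r:ℝ)+1)^2*4^r)) * ∑ s, v s ^ 2 :=
        mul_le_mul_of_nonneg_right hcore hS
    _ ≤ ∑ k ∈ K, (∑ s : Fin (r+1), v s * ((k:ℝ)/m)^(s:ℕ))^2 := hL

end Aux

/-- smallest eigenvalue of 1D polynomial regression designs.
For each degree `r` there is a constant `C > 0` (depending only on `r`) such that for every
`m ≥ 1` and every `K ⊆ {−m, …, m}` with `|K| ≥ r + 1`, the matrix `U = ((k/m)^s)_{k ∈ K, 0 ≤ s ≤ r}`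
satisfies `λ_min(UᵀU) ≥ |K| (|K|/m)^{2r}/C`, i.e.
`‖U v‖₂² ≥ (|K| (|K|/m)^{2r}/C) ‖v‖₂²` for all `v ∈ ℝ^{r+1}`. -/

theorem vandermonde_design_min_eigenvalue (r : ℕ) :
    ∃ C : ℝ, 0 < C ∧
      ∀ (m : ℕ), 1 ≤ m → ∀ K : Finset ℤ, (∀ k ∈ K, |k| ≤ (m : ℤ)) → r + 1 ≤ K.card →
        ∀ v : Fin (r + 1) → ℝ,
          ((K.card : ℝ) * ((K.card : ℝ) / m) ^ (2 * r) / C) * (∑ s, v s ^ 2) ≤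
            ∑ k ∈ K, (∑ s : Fin (r + 1), v s * ((k : ℝ) / m) ^ (s : ℕ)) ^ 2 := by
  refine ⟨((r:ℝ)+1)^2*4^r * (2^(2*r+1)*(2*(r:ℝ)+1)^(2*r+1)), by positivity, ?_⟩
  intro m hm K hK hcard v
  by_cases hbig : 2*r+1 ≤ K.card
  · -- many points
    set t := K.card / (2*r+1) with htdef
    have ht : 1 ≤ t := (Nat.one_le_div_iff (by omega)).mpr hbig
    have hq := Nat.div_add_mod K.card (2*r+1)
    have hmod : K.card % (2*r+1) < 2*r+1 := Nat.mod_lt _ (by omega)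
    have h2 : 2*r+1 ≤ (2*r+1)*t := Nat.le_mul_of_pos_right (2*r+1) ht
    have hn_t : K.card ≤ 2*(2*r+1)*t := by
      calc K.card = (2*r+1)*t + K.card % (2*r+1) := hq.symm
        _ ≤ (2*r+1)*t + (2*r+1)*t :=
            Nat.add_le_add_left (le_trans (Nat.le_of_lt hmod) h2) _
        _ = 2*(2*r+1)*t := by ring
    have hsel : t + (2*t) * r ≤ K.card := by
      calc t + (2*t)*r = t*(2*r+1) := by ring
        _ ≤ K.card := Nat.div_mul_le_self K.card (2*r+1)
    have hn_g : K.card ≤ 2*(2*r+1)*(2*t) :=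
      le_trans hn_t (Nat.mul_le_mul_left (2*(2*r+1)) (by omega))
    exact final_combine r m hm K hK t (2*t) ht (by omega) (by omega) hsel hn_t hn_g v
  · -- few points
    have hsmall : K.card ≤ 2*r := by omega
    have hr : 1 ≤ r := by omega
    set g := (K.card - 1) / r with hgdef
    have hg : 1 ≤ g := (Nat.one_le_div_iff (by omega)).mpr (by omega)
    have hsel : 1 + g * r ≤ K.card := by
      have h := Nat.div_mul_le_self (K.card - 1) r
      calc 1 + g*r ≤ 1 + (K.card - 1) := Nat.add_le_add_left h 1
        _ = K.card := by omega
    have hn_t : K.card ≤ 2*(2*r+1)*1 := by omega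
    have hn_g : K.card ≤ 2*(2*r+1)*g := by
      refine le_trans (show K.card ≤ 2*(2*r+1)*1 by omega) ?_
      exact Nat.mul_le_mul_left (2*(2*r+1)) hg
    exact final_combine r m hm K hK 1 g le_rfl hg hg hsel hn_t hn_g v

end
end

section
/- Fix integers d ≥ 1, r ≥ 0 and a constant c ∈ (0,1). Let q = binom(r+d, d) and p(u) = (u^s : s ∈ ℕ^d, |s| ≤ r) ∈ ℝ^q. Then there exists λ_0 > 0 (depending only on d, r, c) such that for every z ∈ ℝ^d and every a ∈ [c, 1] with B(z,a) ⊆ B(0,1) (sup-norm balls), the q × q moment matrix M(z,a) = ∫_{B(z,a)} p(u) p(u)ᵀ du satisfies bᵀ M(z,a) b ≥ λ_0 ‖b‖₂² for every b ∈ ℝ^q; in particular, the smallest eigenvalue of M(z,a) is bounded below by λ_0 uniformly over such (z, a). -/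
/-!
For fixed `ρ > 0` the form `b ↦ ∫_{B̄(z,ρ)} (∑ b_s u^s)² du` depends continuously on `(z, b)`, and
it is positive for `b ≠ 0`, since a polynomial vanishing on the box `B(z,ρ)` is zero. Its minimum
over the compact set of centres `‖z‖ ≤ 1` and unit vectors `b` is therefore some `λ₀ > 0`, and
homogeneity in `b` gives `λ₀ ‖b‖₂²` as a lower bound for all `b`. Taking `ρ = c/2`, the closed ball
`B̄(z,c/2)` lies inside `B(z,a)` whenever `a ≥ c`, and any `z` with `B(z,a) ⊆ B(0,1)` has `‖z‖ < 1`.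
-/

open MeasureTheory Set
open scoped BigOperators

noncomputable section

/-- Multi-indices of total degree at most `r` (there are `binom(r+d,d)` of them). -/
abbrev MIdx (d r : ℕ) := {s : Fin d → Fin (r + 1) // (∑ k, (s k : ℕ)) ≤ r}

/-- Monomial associated with a multi-index: `u^s = u_1^{s_1} ⋯ u_d^{s_d}`. -/
def mono {d r : ℕ} (s : MIdx d r) (u : Fin d → ℝ) : ℝ := ∏ k, u k ^ (s.val k : ℕ)

open Function Metric

theorem IsCompact.exists_pos_mul_norm_sq_le {X E : Type*} [TopologicalSpace X]
    [NormedAddCommGroup E] [NormedSpace ℝ E] [FiniteDimensional ℝ E] {K : Set X}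
    (hK : IsCompact K) {F : X → E → ℝ} (hF : Continuous (uncurry F))
    (hsmul : ∀ x (t : ℝ) b, F x (t • b) = t ^ 2 * F x b) (hpos : ∀ x ∈ K, ∀ b ≠ 0, 0 < F x b) :
    ∃ lam > 0, ∀ x ∈ K, ∀ b, lam * ‖b‖ ^ 2 ≤ F x b := by
  obtain ⟨lam, hlam, hmin⟩ := (hK.prod (isCompact_sphere (0 : E) 1)).exists_forall_le'
    hF.continuousOn (a := 0) fun p hp => hpos p.1 hp.1 p.2 (ne_zero_of_mem_unit_sphere ⟨p.2, hp.2⟩)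
  refine ⟨lam, hlam, fun x hx b => ?_⟩
  rcases eq_or_ne b 0 with rfl | hb
  · simpa using (hsmul x 0 0).ge
  · have hunit : ‖b‖⁻¹ • b ∈ sphere (0 : E) 1 := by
      simp [norm_smul, hb]
    calc lam * ‖b‖ ^ 2 ≤ ‖b‖ ^ 2 * F x (‖b‖⁻¹ • b) := by
          rw [mul_comm]; exact mul_le_mul_of_nonneg_left (hmin (x, _) ⟨hx, hunit⟩) (sq_nonneg _)
      _ = F x b := by rw [← hsmul, smul_smul, mul_inv_cancel₀ (norm_ne_zero_iff.2 hb), one_smul]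

theorem setIntegral_pos_of_mem_interior {X : Type*} [TopologicalSpace X] [MeasurableSpace X]
    [OpensMeasurableSpace X] {μ : Measure X} [μ.IsOpenPosMeasure] {f : X → ℝ} {s : Set X}
    {x : X} (hf : Continuous f) (hf₀ : 0 ≤ f) (hfi : IntegrableOn f s μ) (hx : x ∈ interior s)
    (hfx : f x ≠ 0) : 0 < ∫ y in s, f y ∂μ := by
  rw [setIntegral_pos_iff_support_of_nonneg_ae (ae_of_all _ hf₀) hfi]
  exact ((hf.isOpen_support.inter isOpen_interior).measure_pos μ ⟨x, hfx, hx⟩).trans_le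
    (measure_mono (inter_subset_inter_right _ interior_subset))

theorem setIntegral_closedBall_zero_comp_add {G E : Type*} [NormedAddCommGroup G]
    [MeasurableSpace G] [BorelSpace G] [NormedAddCommGroup E] [NormedSpace ℝ E]
    (μ : Measure G) [μ.IsAddLeftInvariant] (f : G → E) (z : G) (ρ : ℝ) :
    ∫ v in closedBall 0 ρ, f (z + v) ∂μ = ∫ u in closedBall z ρ, f u ∂μ := by
  rw [← (measurePreserving_add_left μ z).setIntegral_preimage_emb
    (measurableEmbedding_addLeft z) f]
  simp [preimage_add_closedBall]

namespace MIdx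

variable {d r : ℕ}

def toFinsupp (s : MIdx d r) : Fin d →₀ ℕ :=
  Finsupp.equivFunOnFinite.symm fun k => s.val k

theorem toFinsupp_injective : Injective (toFinsupp (d := d) (r := r)) := by
  intro s t h
  ext k
  simpa [toFinsupp] using DFunLike.congr_fun h k

end MIdx

section

variable {d r : ℕ}

-- `bᵀ p(u)` in the notation of the statement.
def polyFun (b : MIdx d r → ℝ) (u : Fin d → ℝ) : ℝ := ∑ s, b s * mono s u

@[fun_prop]
theorem Continuous.polyFun {X : Type*} [TopologicalSpace X] {f : X → MIdx d r → ℝ}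
    {g : X → Fin d → ℝ} (hf : Continuous f) (hg : Continuous g) :
    Continuous fun x => polyFun (f x) (g x) := by
  unfold _root_.polyFun mono
  fun_prop

theorem polyFun_smul (t : ℝ) (b : MIdx d r → ℝ) (u : Fin d → ℝ) :
    polyFun (t • b) u = t * polyFun b u := by
  simp [polyFun, Finset.mul_sum, mul_assoc]

def toMvPolynomial (b : MIdx d r → ℝ) : MvPolynomial (Fin d) ℝ :=
  ∑ s, MvPolynomial.monomial s.toFinsupp (b s)

theorem eval_toMvPolynomial (b : MIdx d r → ℝ) (u : Fin d → ℝ) :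
    MvPolynomial.eval u (toMvPolynomial b) = polyFun b u := by
  simp [toMvPolynomial, polyFun, mono, MvPolynomial.eval_monomial, Finsupp.prod_fintype,
    MIdx.toFinsupp]

theorem coeff_toMvPolynomial (b : MIdx d r → ℝ) (s : MIdx d r) :
    (toMvPolynomial b).coeff s.toFinsupp = b s := by
  simp [toMvPolynomial, MvPolynomial.coeff_sum, MvPolynomial.coeff_monomial,
    MIdx.toFinsupp_injective.eq_iff]

theorem exists_polyFun_ne_zero {b : MIdx d r → ℝ} (hb : b ≠ 0) (z : Fin d → ℝ) {ρ : ℝ}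
    (hρ : 0 < ρ) : ∃ u ∈ ball z ρ, polyFun b u ≠ 0 := by
  by_contra! h
  apply hb
  have hP : toMvPolynomial b = 0 := by
    refine MvPolynomial.funext_set (fun k => ball (z k) ρ) (fun k => ?_) fun u hu => ?_
    · rw [Real.ball_eq_Ioo]
      exact Ioo_infinite (by linarith)
    · rw [eval_toMvPolynomial, map_zero]
      exact h u (by rwa [ball_pi z hρ])
  funext s
  simpa [hP] using (coeff_toMvPolynomial b s).symm

end

theorem IsCompact.exists_pos_mul_sum_sq_le_setIntegral_polyFun_sq {d r : ℕ}
    {K : Set (Fin d → ℝ)} (hK : IsCompact K) {ρ : ℝ} (hρ : 0 < ρ) :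
    ∃ lam > 0, ∀ z ∈ K, ∀ b : MIdx d r → ℝ,
      lam * ∑ s, b s ^ 2 ≤ ∫ u in closedBall z ρ, polyFun b u ^ 2 := by
  -- Integrating over a ball that does not move with `z` makes continuity in `z` a standard
  -- statement about parametric integrals.
  set F : (Fin d → ℝ) → EuclideanSpace ℝ (MIdx d r) → ℝ :=
    fun z b => ∫ v in closedBall 0 ρ, polyFun b.ofLp (z + v) ^ 2
  have hF (z : Fin d → ℝ) (b : EuclideanSpace ℝ (MIdx d r)) :
      F z b = ∫ u in closedBall z ρ, polyFun b.ofLp u ^ 2 :=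
    setIntegral_closedBall_zero_comp_add volume (fun u => polyFun b.ofLp u ^ 2) z ρ
  have hcont : Continuous (uncurry F) :=
    continuous_parametric_integral_of_continuous (by fun_prop) (isCompact_closedBall 0 ρ)
  have hsmul (z : Fin d → ℝ) (t : ℝ) (b : EuclideanSpace ℝ (MIdx d r)) :
      F z (t • b) = t ^ 2 * F z b := by
    simp [F, polyFun_smul, mul_pow, integral_const_mul]
  have hpos (z : Fin d → ℝ) (_ : z ∈ K) (b : EuclideanSpace ℝ (MIdx d r)) (hb : b ≠ 0) :
      0 < F z b := by
    obtain ⟨u, hu, hne⟩ := exists_polyFun_ne_zero (b := b.ofLp) (by simpa using hb) z hρ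
    rw [hF]
    exact setIntegral_pos_of_mem_interior (by fun_prop) (fun _ => sq_nonneg _)
      ((by fun_prop : Continuous fun u => polyFun b.ofLp u ^ 2).continuousOn.integrableOn_compact
        (isCompact_closedBall z ρ))
      (ball_subset_interior_closedBall hu) (pow_ne_zero 2 hne)
  obtain ⟨lam, hlam, hle⟩ := hK.exists_pos_mul_norm_sq_le hcont hsmul hpos
  refine ⟨lam, hlam, fun z hz b => ?_⟩
  simpa [EuclideanSpace.real_norm_sq_eq, hF] using hle z hz (WithLp.toLp 2 b)

theorem moment_matrix_uniform_lower_bound_general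
    (d r : ℕ) (c : ℝ) (hc : c ∈ Set.Ioo (0 : ℝ) 1) :
    ∃ lam : ℝ, 0 < lam ∧
      ∀ (z : Fin d → ℝ) (a : ℝ), c ≤ a → a ≤ 1 →
        Metric.ball z a ⊆ Metric.ball (0 : Fin d → ℝ) 1 →
        ∀ b : MIdx d r → ℝ,
          lam * (∑ s : MIdx d r, b s ^ 2) ≤
            ∫ u in Metric.ball z a, (∑ s : MIdx d r, b s * mono s u) ^ 2 := by
  have hc₀ : 0 < c := hc.1
  obtain ⟨lam, hlam, hle⟩ := (isCompact_closedBall (0 : Fin d → ℝ) 1)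
    |>.exists_pos_mul_sum_sq_le_setIntegral_polyFun_sq (r := r) (half_pos hc₀)
  refine ⟨lam, hlam, fun z a hca _ hsub b => ?_⟩
  have hz : z ∈ closedBall (0 : Fin d → ℝ) 1 :=
    ball_subset_closedBall (hsub (mem_ball_self (hc₀.trans_le hca)))
  calc lam * ∑ s, b s ^ 2 ≤ ∫ u in closedBall z (c / 2), polyFun b u ^ 2 := hle z hz b
    _ ≤ ∫ u in ball z a, polyFun b u ^ 2 := by
      refine setIntegral_mono_set ?_ (ae_of_all _ fun _ => sq_nonneg _)
        (closedBall_subset_ball (by linarith)).eventuallyLE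
      exact ((by fun_prop : Continuous fun u => polyFun b u ^ 2).continuousOn.integrableOn_compact
        (isCompact_closedBall z a)).mono_set ball_subset_closedBall

/-- uniform lower bound for moment matrices over interior balls.
Fix `d ≥ 1`, `r ≥ 0`, `c ∈ (0,1)`. There is `λ₀ > 0` (depending only on `d, r, c`) such
that for every sup-norm ball `B(z,a) ⊆ B(0,1)` with `a ∈ [c,1]`, the moment matrix
`M(z,a) = ∫_{B(z,a)} p(u)p(u)ᵀ du` satisfies `bᵀ M(z,a) b ≥ λ₀ ‖b‖₂²` for every `b`. -/
theorem moment_matrix_uniform_lower_bound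
    (d r : ℕ) (hd : 1 ≤ d) (c : ℝ) (hc : c ∈ Set.Ioo (0 : ℝ) 1) :
    ∃ lam : ℝ, 0 < lam ∧
      ∀ (z : Fin d → ℝ) (a : ℝ), c ≤ a → a ≤ 1 →
        Metric.ball z a ⊆ Metric.ball (0 : Fin d → ℝ) 1 →
        ∀ b : MIdx d r → ℝ,
          lam * (∑ s : MIdx d r, b s ^ 2) ≤
            ∫ u in Metric.ball z a, (∑ s : MIdx d r, b s * mono s u) ^ 2 :=
  moment_matrix_uniform_lower_bound_general d r c hc

end
end

section
/- Fix integers d ≥ 1 and r ≥ 0, let q = binom(r+d, d) and p(u) = (u^s : s ∈ ℕ^d, |s| ≤ r) ∈ ℝ^q. Let M = ∫_{(−1,1)^d} p(u) p(u)ᵀ du and v = ∫_{(0,1) × (−1,1)^{d−1}} p(u) du. Then M is positive definite and eᵀ M^{−1} v = 1/2, where e ∈ ℝ^q is the standard coordinate vector indexed by the zero multi-index s = 0. -/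
open MeasureTheory Set
open scoped BigOperators

noncomputable section

/-- The zero multi-index. -/
def mZero (d r : ℕ) : MIdx d r := ⟨fun _ => 0, by simp⟩

/-! `M` is the Gram matrix of the monomials on the open cube, and the monomials are linearly
independent there (a polynomial vanishing on a box with infinite sides is zero), so `M` is
positive definite.

Let `D` be the diagonal matrix with entries `(-1)^{s₁}`: it records the action of the reflection
`u₁ ↦ -u₁` on monomials. The cube is invariant under this reflection, so `D` commutes with `M`,
and splitting the cube into its two halves `u₁ > 0` and `u₁ < 0` gives `M e = v + D v`. Hence
`w := M⁻¹ v` satisfies `w + D w = e`, whose coordinate at the zero multi-index reads `2 w₀ = 1`. -/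

open Matrix

theorem setIntegral_univ_pi_prod {ι 𝕜 : Type*} [Fintype ι] [RCLike 𝕜] {E : ι → Type*}
    [∀ i, MeasureSpace (E i)] [∀ i, SigmaFinite (volume : Measure (E i))]
    (S : (i : ι) → Set (E i)) (f : (i : ι) → E i → 𝕜) :
    ∫ x in univ.pi S, ∏ i, f i (x i) = ∏ i, ∫ y in S i, f i y := by
  rw [volume_pi, Measure.restrict_pi_pi, integral_fintype_prod_eq_prod]

theorem integral_Ioo_neg_one_one_pow (n : ℕ) :
    ∫ x in Ioo (-1 : ℝ) 1, x ^ n = (1 + (-1) ^ n) * ∫ x in Ioo (0 : ℝ) 1, x ^ n := by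
  simp only [← integral_Ioc_eq_integral_Ioo, ← intervalIntegral.integral_of_le
    (show (-1 : ℝ) ≤ 1 by norm_num), ← intervalIntegral.integral_of_le zero_le_one, integral_pow]
  rw [pow_succ (-1 : ℝ)]
  ring

theorem Matrix.commute_diagonal_of_apply_ne_zero {n R : Type*} [Fintype n] [DecidableEq n]
    [CommSemiring R] {M : Matrix n n R} {σ : n → R} (h : ∀ i j, M i j ≠ 0 → σ i = σ j) :
    Commute (diagonal σ) M := by
  ext i j
  rw [diagonal_mul, mul_diagonal]
  by_cases hij : M i j = 0
  · simp [hij]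
  · rw [h i j hij, mul_comm]

theorem Matrix.inv_mulVec_apply_eq_half {n K : Type*} [Fintype n] [DecidableEq n] [Field K]
    [NeZero (2 : K)] {M : Matrix n n K} (hM : IsUnit M) {σ : n → K}
    (hσM : Commute (diagonal σ) M) {i : n} (hσi : σ i = 1) {v : n → K}
    (hMv : ∀ j, M j i = (1 + σ j) * v j) : (M⁻¹ *ᵥ v) i = 1 / 2 := by
  set w := M⁻¹ *ᵥ v
  have hw : M *ᵥ w = v := by
    rw [mulVec_mulVec, mul_nonsing_inv _ ((isUnit_iff_isUnit_det M).mp hM), one_mulVec]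
  have hwσw : w + diagonal σ *ᵥ w = Pi.single i 1 := by
    apply mulVec_injective_iff_isUnit.mpr hM
    rw [mulVec_add, hw, mulVec_mulVec, ← hσM.eq, ← mulVec_mulVec, hw, mulVec_single]
    ext j
    simp only [Pi.add_apply, mulVec_diagonal, MulOpposite.op_one, Pi.smul_apply, col_apply, hMv,
      one_smul]
    ring
  have := congr_fun hwσw i
  simp only [Pi.add_apply, mulVec_diagonal, hσi, one_mul, Pi.single_eq_same] at this
  rw [eq_div_iff two_ne_zero]
  linear_combination this

theorem setIntegral_sq_pos {X : Type*} [TopologicalSpace X] [MeasurableSpace X]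
    [OpensMeasurableSpace X] {μ : Measure X} [μ.IsOpenPosMeasure] {U : Set X} (hU : IsOpen U)
    {f : X → ℝ} (hf : Continuous f) (hfi : IntegrableOn (fun x => f x ^ 2) U μ)
    {x : X} (hxU : x ∈ U) (hx : f x ≠ 0) : 0 < ∫ x in U, f x ^ 2 ∂μ := by
  rw [setIntegral_pos_iff_support_of_nonneg_ae (ae_of_all _ fun x => sq_nonneg (f x)) hfi,
    Function.support_pow _ two_ne_zero]
  exact (hf.isOpen_support.inter hU).measure_pos μ ⟨x, hx, hxU⟩

theorem posDef_gram_of_continuous {ι X : Type*} [Fintype ι] [TopologicalSpace X]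
    [MeasurableSpace X] [OpensMeasurableSpace X] {μ : Measure X} [μ.IsOpenPosMeasure]
    {U : Set X} (hU : IsOpen U) {f : ι → X → ℝ} (hf : ∀ i, Continuous (f i))
    (hfi : ∀ i j, IntegrableOn (fun x => f i x * f j x) U μ)
    (hf_indep : ∀ c : ι → ℝ, c ≠ 0 → ∃ x ∈ U, ∑ i, c i * f i x ≠ 0) :
    PosDef (of fun i j => ∫ x in U, f i x * f j x ∂μ) := by
  refine posDef_iff_dotProduct_mulVec.mpr ⟨?_, fun c hc => ?_⟩
  · ext i j
    simp [mul_comm]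
  have hsq (x : X) : (∑ i, c i * f i x) ^ 2 = ∑ i, ∑ j, c i * c j * (f i x * f j x) := by
    rw [sq, Finset.sum_mul_sum]
    exact Finset.sum_congr rfl fun i _ => Finset.sum_congr rfl fun j _ => by ring
  have hint (i j : ι) : IntegrableOn (fun x => c i * c j * (f i x * f j x)) U μ :=
    (hfi i j).const_mul _
  have hquad : star c ⬝ᵥ (of (fun i j => ∫ x in U, f i x * f j x ∂μ) *ᵥ c)
      = ∫ x in U, (∑ i, c i * f i x) ^ 2 ∂μ := by
    simp_rw [hsq]
    rw [integral_finsetSum _ fun i _ => integrable_finsetSum _ fun j _ => hint i j]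
    simp_rw [integral_finsetSum _ fun j _ => hint _ j, integral_const_mul]
    simp only [dotProduct, mulVec, of_apply, star_trivial, Finset.mul_sum]
    exact Finset.sum_congr rfl fun i _ => Finset.sum_congr rfl fun j _ => by ring
  obtain ⟨x, hxU, hx⟩ := hf_indep c hc
  rw [hquad]
  refine setIntegral_sq_pos hU (continuous_finsetSum _ fun i _ =>
    continuous_const.mul (hf i)) ?_ hxU hx
  simp_rw [hsq]
  exact integrable_finsetSum _ fun i _ => integrable_finsetSum _ fun j _ => hint i j

def MIdx.toFinsupp_s16 {d r : ℕ} (s : MIdx d r) : Fin d →₀ ℕ :=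
  Finsupp.equivFunOnFinite.symm fun k => s.val k

theorem MIdx.toFinsupp_injective_s16 (d r : ℕ) : Function.Injective (@MIdx.toFinsupp_s16 d r) :=
  fun _ _ hst => Subtype.ext <| funext fun k => Fin.ext <| DFunLike.congr_fun hst k

theorem mono_eq_eval_monomial {d r : ℕ} (s : MIdx d r) (u : Fin d → ℝ) :
    mono s u = MvPolynomial.eval u (MvPolynomial.monomial (MIdx.toFinsupp_s16 s) 1) := by
  rw [MvPolynomial.eval_monomial, one_mul, Finsupp.prod_fintype _ _ fun k => pow_zero (u k)]
  rfl

theorem exists_sum_mul_mono_ne_zero {d r : ℕ} {S : Fin d → Set ℝ} (hS : ∀ k, (S k).Infinite)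
    {c : MIdx d r → ℝ} (hc : c ≠ 0) : ∃ u ∈ univ.pi S, ∑ s, c s * mono s u ≠ 0 := by
  by_contra! h
  have hP : ∑ s, c s • MvPolynomial.monomial (MIdx.toFinsupp_s16 s) (1 : ℝ) = 0 :=
    MvPolynomial.funext_set S hS fun u hu => by
      simpa [MvPolynomial.smul_eval, ← mono_eq_eval_monomial] using h u hu
  have hli := (MvPolynomial.basisMonomials (Fin d) ℝ).linearIndependent.comp _
    (MIdx.toFinsupp_injective_s16 d r)
  rw [Fintype.linearIndependent_iff] at hli
  exact hc (funext fun s => hli c (by simpa using hP) s)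

def cube (d : ℕ) : Set (Fin d → ℝ) := univ.pi fun _ => Ioo (-1) 1

def halfCube {d : ℕ} (i : Fin d) : Set (Fin d → ℝ) :=
  univ.pi (Function.update (fun _ => Ioo (-1) 1) i (Ioo 0 1))

theorem cube_eq_setOf (d : ℕ) : cube d = {u : Fin d → ℝ | ∀ k, u k ∈ Ioo (-1 : ℝ) 1} := by
  ext u
  simp [cube]

theorem halfCube_eq_setOf {d : ℕ} (i : Fin d) :
    halfCube i = {u : Fin d → ℝ | u i ∈ Ioo (0 : ℝ) 1 ∧ ∀ k, k ≠ i → u k ∈ Ioo (-1 : ℝ) 1} := by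
  ext u
  simp only [halfCube, mem_ofPred_eq, mem_univ_pi]
  refine ⟨fun h => ⟨by simpa using h i, fun k hk => by simpa [hk] using h k⟩, fun ⟨hi, h⟩ k => ?_⟩
  rcases eq_or_ne k i with rfl | hk
  · simpa using hi
  · simpa [hk] using h k hk

theorem isOpen_cube (d : ℕ) : IsOpen (cube d) :=
  isOpen_set_pi finite_univ fun _ _ => isOpen_Ioo

theorem Continuous.integrableOn_cube {d : ℕ} {g : (Fin d → ℝ) → ℝ} (hg : Continuous g) :
    IntegrableOn g (cube d) :=
  (hg.continuousOn.integrableOn_compact (isCompact_univ_pi fun _ => isCompact_Icc)).mono_set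
    (pi_mono fun _ _ => Ioo_subset_Icc_self)

theorem continuous_mono {d r : ℕ} (s : MIdx d r) : Continuous (mono s) :=
  continuous_finsetProd _ fun k _ => (continuous_apply k).pow _

theorem setIntegral_univ_pi_mono {d r : ℕ} (S : Fin d → Set ℝ) (s : MIdx d r) :
    ∫ u in univ.pi S, mono s u = ∏ k, ∫ x in S k, x ^ (s.val k : ℕ) :=
  setIntegral_univ_pi_prod S fun k x => x ^ (s.val k : ℕ)

theorem setIntegral_cube_mono_mul_mono {d r : ℕ} (s t : MIdx d r) :
    ∫ u in cube d, mono s u * mono t u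
      = ∏ k, ∫ x in Ioo (-1 : ℝ) 1, x ^ ((s.val k : ℕ) + t.val k) := by
  simp_rw [mono, ← Finset.prod_mul_distrib, ← pow_add]
  exact setIntegral_univ_pi_prod _ fun k x => x ^ ((s.val k : ℕ) + t.val k)

theorem neg_one_pow_eq_of_setIntegral_cube_mono_mul_mono_ne_zero {d r : ℕ} (i : Fin d)
    {s t : MIdx d r} (h : ∫ u in cube d, mono s u * mono t u ≠ 0) :
    (-1 : ℝ) ^ (s.val i : ℕ) = (-1) ^ (t.val i : ℕ) := by
  rw [setIntegral_cube_mono_mul_mono] at h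
  have hi := Finset.prod_ne_zero_iff.mp h i (Finset.mem_univ i)
  rw [integral_Ioo_neg_one_one_pow] at hi
  have heven : (-1 : ℝ) ^ ((s.val i : ℕ) + t.val i) = 1 := by
    rcases neg_one_pow_eq_or ℝ ((s.val i : ℕ) + t.val i) with h1 | h1
    · exact h1
    · simp [h1] at hi
  calc (-1 : ℝ) ^ (s.val i : ℕ) = (-1) ^ ((s.val i : ℕ) + t.val i) * (-1) ^ (t.val i : ℕ) := by
        rw [pow_add, mul_assoc, ← pow_add, Even.neg_one_pow ⟨_, rfl⟩, mul_one]
    _ = (-1) ^ (t.val i : ℕ) := by rw [heven, one_mul]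

theorem setIntegral_cube_mono_eq {d r : ℕ} (i : Fin d) (s : MIdx d r) :
    ∫ u in cube d, mono s u = (1 + (-1) ^ (s.val i : ℕ)) * ∫ u in halfCube i, mono s u := by
  rw [cube, halfCube, setIntegral_univ_pi_mono, setIntegral_univ_pi_mono,
    Fintype.prod_eq_mul_prod_compl i, Fintype.prod_eq_mul_prod_compl i, Function.update_self,
    integral_Ioo_neg_one_one_pow, mul_assoc]
  congr 2
  refine Finset.prod_congr rfl fun k hk => ?_
  rw [Function.update_of_ne (by simpa using hk)]

theorem mono_mZero {d r : ℕ} (u : Fin d → ℝ) : mono (mZero d r) u = 1 := by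
  simp [mono, mZero]

/-- half-cube moment computation.
Let `M = ∫_{(-1,1)^d} p(u)p(u)ᵀ du` and `v = ∫_{(0,1)×(-1,1)^{d-1}} p(u) du`, where
`p(u) = (u^s)_{|s| ≤ r}`. Then `M` is positive definite and `eᵀ M⁻¹ v = 1/2`, where `e`
is the coordinate vector of the zero multi-index. -/
theorem half_cube_moment_identity
    (d r : ℕ) (hd : 1 ≤ d)
    (M : Matrix (MIdx d r) (MIdx d r) ℝ)
    (hM : M = fun s t => ∫ u in {u : Fin d → ℝ | ∀ k, u k ∈ Set.Ioo (-1 : ℝ) 1},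
      mono s u * mono t u)
    (v : MIdx d r → ℝ)
    (hv : v = fun s => ∫ u in {u : Fin d → ℝ | u ⟨0, hd⟩ ∈ Set.Ioo (0 : ℝ) 1 ∧
      ∀ k, k ≠ ⟨0, hd⟩ → u k ∈ Set.Ioo (-1 : ℝ) 1}, mono s u) :
    M.PosDef ∧
      dotProduct (Pi.single (mZero d r) (1 : ℝ)) (M⁻¹.mulVec v) = 1 / 2 := by
  set i₀ : Fin d := ⟨0, hd⟩
  rw [← cube_eq_setOf] at hM
  rw [← halfCube_eq_setOf i₀] at hv
  subst hM hv
  have hPD : PosDef (of fun s t : MIdx d r => ∫ u in cube d, mono s u * mono t u) :=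
    posDef_gram_of_continuous (isOpen_cube d) continuous_mono
      (fun s t => ((continuous_mono s).mul (continuous_mono t)).integrableOn_cube)
      fun c hc => exists_sum_mul_mono_ne_zero (fun _ => Ioo_infinite (by norm_num)) hc
  refine ⟨hPD, ?_⟩
  rw [single_dotProduct, one_mul]
  refine inv_mulVec_apply_eq_half hPD.isUnit (σ := fun s => (-1) ^ (s.val i₀ : ℕ))
    (commute_diagonal_of_apply_ne_zero fun _ _ h =>
      neg_one_pow_eq_of_setIntegral_cube_mono_mul_mono_ne_zero i₀ h) (by simp [mZero]) fun s => ?_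
  simpa only [of_apply, mono_mZero, mul_one] using setIntegral_cube_mono_eq i₀ s

end
end
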